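/- arXiv:1912.02604 — 10 statements merged into one kernel-verified Lean document; each statement's English description precedes it below -/
import Mathlib

section
/- Let S = {0, 1, 2} ⊆ ℚ and s₀ = 0. Every colouring φ : ℚ → Fin k that attains at least two values contains an almost-monochromatic positive homothet of (S, s₀): there exist c ∈ ℚ and λ ∈ ℚ with λ > 0 such that φ(c + λ) = φ(c + 2λ) ≠ φ(c). -/
/-- A strictly increasing sequence of positive integers whose pairwise
differences divide the smaller element. -/
lemma divset (n : ℕ) : ∃ f : ℕ → ℕ,
    (∀ i, i < n → 0 < f i) ∧
    (∀ i j, i < j → j < n → f i < f j ∧ (f j - f i) ∣ f i) := by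
  induction n with
  | zero => exact ⟨id, by omega, by omega⟩
  | succ n ih =>
    obtain ⟨f, hpos, hlt⟩ := ih
    set M := ∏ i ∈ Finset.range n, f i with hM
    have hMpos : 0 < M := Finset.prod_pos (fun i hi => hpos i (Finset.mem_range.mp hi))
    have hdvdM : ∀ i, i < n → f i ∣ M :=
      fun i hi => Finset.dvd_prod_of_mem f (Finset.mem_range.mpr hi)
    refine ⟨fun m => if m = 0 then M else f (m - 1) + M, ?_, ?_⟩
    · intro i _; dsimp only; split <;> omega
    · intro i j hij hjn
      dsimp only
      rcases Nat.eq_zero_or_pos i with hi0 | hi0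
      · subst hi0
        rw [if_pos rfl, if_neg (by omega : ¬ j = 0)]
        have hj1 : j - 1 < n := by omega
        have := hpos (j-1) hj1
        refine ⟨by omega, ?_⟩
        rw [Nat.add_sub_cancel]
        exact hdvdM _ hj1
      · rw [if_neg (by omega), if_neg (by omega)]
        have h := hlt (i-1) (j-1) (by omega) (by omega)
        refine ⟨by omega, ?_⟩
        have he : f (j-1) + M - (f (i-1) + M) = f (j-1) - f (i-1) := by omega
        rw [he]
        exact Nat.dvd_add h.2 (dvd_trans h.2 (hdvdM _ (by omega)))

/-- Downward propagation: if no AM triple exists, a colour class containing two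
points contains the whole downward AP with their gap. -/
lemma closure_ap {k : ℕ} (φ : ℚ → Fin k)
    (H : ∀ c l : ℚ, 0 < l → φ (c + l) = φ (c + 2 * l) → φ (c + l) = φ c)
    (u g : ℚ) (hg : 0 < g) (h : φ u = φ (u + g)) :
    ∀ m : ℕ, φ (u - m * g) = φ u := by
  have key : ∀ m : ℕ, φ (u - m * g) = φ u ∧ φ (u - (m+1 : ℕ) * g) = φ u := by
    intro m
    induction m with
    | zero =>
      refine ⟨by norm_num, ?_⟩
      have e1 : u - g + g = u := by ring
      have e2 : u - g + 2 * g = u + g := by ring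
      have := H (u - g) g hg (by rw [e1, e2]; exact h)
      rw [e1] at this
      have e3 : u - ((0:ℕ)+1 : ℕ) * g = u - g := by push_cast; ring
      rw [e3]
      exact this.symm
    | succ m ih =>
      obtain ⟨h1, h2⟩ := ih
      refine ⟨h2, ?_⟩
      have e1 : u - ((m+2 : ℕ) : ℚ) * g + g = u - ((m+1:ℕ) : ℚ) * g := by push_cast; ring
      have e2 : u - ((m+2 : ℕ) : ℚ) * g + 2 * g = u - (m : ℚ) * g := by push_cast; ring
      have := H (u - ((m+2:ℕ) : ℚ) * g) g hg (by rw [e1, e2]; exact h2.trans h1.symm)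
      rw [e1] at this
      have e3 : ((m+1 : ℕ)+1 : ℕ) = (m+2 : ℕ) := by omega
      rw [e3]
      exact this.symm.trans h2
  exact fun m => (key m).1

/-- Every colouring of `ℚ` attaining at least two values contains an
almost-monochromatic positive homothet of `({0,1,2}, 0)`. -/
theorem am_homothet_in_Q (k : ℕ) (φ : ℚ → Fin k) (hφ : ∃ x y, φ x ≠ φ y) :
    ∃ (c l : ℚ), 0 < l ∧ φ (c + l) = φ (c + 2 * l) ∧ φ (c + l) ≠ φ c := by
  by_contra hcon
  push_neg at hcon
  obtain ⟨x, y, hxy⟩ := hφ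
  have hne : x ≠ y := fun h => hxy (by rw [h])
  set p := min x y with hp
  set q := max x y with hq
  have hpq : p < q := min_lt_max.mpr hne
  have hδ : (0:ℚ) < q - p := sub_pos.mpr hpq
  obtain ⟨f, hpos, hlt⟩ := divset (k+1)
  set N := ∏ i ∈ Finset.range (k+1), f i with hN
  have hNpos : 0 < N := Finset.prod_pos (fun i hi => hpos i (Finset.mem_range.mp hi))
  have hNdvd : ∀ i, i < k+1 → f i ∣ N :=
    fun i hi => Finset.dvd_prod_of_mem f (Finset.mem_range.mpr hi)
  have hNQ : (0:ℚ) < (N : ℚ) := by exact_mod_cast hNpos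
  set γ : ℚ := (q - p) / N with hγdef
  have hγ : 0 < γ := div_pos hδ hNQ
  have main : ∀ a b : ℕ, a < b → b < k + 1 →
      φ (q + f a * γ) = φ (q + f b * γ) → False := by
    intro a b hab hbk hfeq
    obtain ⟨hflt, hdvd⟩ := hlt a b hab hbk
    set A := f a with hA
    set B := f b with hB
    have hcast : ((B - A : ℕ) : ℚ) = (B:ℚ) - (A:ℚ) := by
      exact_mod_cast Nat.cast_sub hflt.le
    set g' : ℚ := ((B - A : ℕ) : ℚ) * γ with hg'def
    have hg' : 0 < g' := by
      apply mul_pos _ hγ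
      have : 0 < B - A := by omega
      exact_mod_cast this
    set u : ℚ := q + A * γ with hu
    have hstep : φ u = φ (u + g') := by
      have : u + g' = q + (B:ℚ) * γ := by rw [hu, hg'def, hcast]; ring
      rw [this]; exact hfeq
    have hclo := closure_ap φ hcon u g' hg' hstep
    set m₁ := A / (B - A) with hm1
    have hm1e : m₁ * (B - A) = A := Nat.div_mul_cancel hdvd
    have hm1q : (m₁ : ℚ) * ((B - A : ℕ) : ℚ) = (A : ℚ) := by exact_mod_cast hm1e
    have hqcol : φ q = φ u := by
      have e : u - (m₁ : ℚ) * g' = q := by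
        rw [hu, hg'def]; linear_combination (-γ) * hm1q
      have := hclo m₁
      rw [e] at this
      exact this
    have hNdvdBA : (B - A) ∣ N := dvd_trans hdvd (hNdvd a (by omega))
    set m₂ := m₁ + N / (B - A) with hm2
    have hm2e : (N / (B - A)) * (B - A) = N := Nat.div_mul_cancel hNdvdBA
    have hm2q : ((N / (B-A) : ℕ) : ℚ) * ((B - A : ℕ) : ℚ) = (N : ℚ) := by exact_mod_cast hm2e
    have hNγ : (N : ℚ) * γ = q - p := by
      rw [hγdef]; field_simp
    have hpcol : φ p = φ u := by
      have e : u - (m₂ : ℚ) * g' = p := by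
        rw [hu, hg'def]
        have : ((m₂ : ℕ) : ℚ) = (m₁ : ℚ) + ((N / (B-A) : ℕ) : ℚ) := by
          rw [hm2]; push_cast; ring
        rw [this]
        linear_combination (-γ) * hm1q + (-γ) * hm2q - hNγ
      have := hclo m₂
      rw [e] at this
      exact this
    have hthis : φ p = φ q := hpcol.trans hqcol.symm
    rw [hp, hq] at hthis
    rcases le_total x y with h' | h'
    · rw [min_eq_left h', max_eq_right h'] at hthis
      exact hxy hthis
    · rw [min_eq_right h', max_eq_left h'] at hthis
      exact hxy hthis.symm
  have hcard : Fintype.card (Fin k) < Fintype.card (Fin (k+1)) := by simp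
  obtain ⟨i, j, hij, hfeq⟩ :=
    Fintype.exists_ne_map_eq_of_card_lt (fun i : Fin (k+1) => φ (q + f i * γ)) hcard
  have hij' : (i : ℕ) ≠ (j : ℕ) := fun h => hij (Fin.ext h)
  rcases lt_or_gt_of_ne hij' with h | h
  · exact main i j h j.isLt hfeq
  · exact main j i h i.isLt hfeq.symm
end

section
/- Let S ⊆ ℤ be finite with |S| ≥ 3 and let s₀ ∈ S be an extreme point of S, i.e. s₀ = min S or s₀ = max S. Then every AP-free finite colouring of ℕ contains an almost-monochromatic positive homothetic copy of (S, s₀) lying in ℕ: there exist c ∈ ℝ and λ > 0 with c + λ·S ⊆ ℕ such that (c + λ·S, c + λ·s₀) is almost-monochromatic. -/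
/-!
Suppose no copy of `(S, s₀)` is almost-monochromatic: whenever the points of a copy other than
`s₀` share a colour, so does the point at `s₀`. If `s₀ = max S`, a van der Waerden progression of
length `s₀ - min S` is then extended upwards, term by term, to an infinite monochromatic
progression. If `s₀ = min S`, colours propagate downwards instead; applying van der Waerden to
the colouring `n ↦ lim_{m → 𝒰} φ (m + n)` along a non-principal ultrafilter `𝒰` yields monochromatic
blocks with a common difference and residue arbitrarily far out, and propagating each of them
down to `0` colours a whole residue class.
-/

open Filter

def APFreeN {k : ℕ} (φ : ℕ → Fin k) : Prop :=
  ¬ ∃ (a t : ℕ) (c : Fin k), 1 ≤ t ∧ ∀ n : ℕ, φ (a + n * t) = c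

section Propagation

variable {α : Type*} {f : ℕ → α} {c : α}

theorem forall_eq_of_propagate_up {D : ℕ}
    (hstep : ∀ x, (∀ t ∈ Finset.range D, f (x + t) = c) → f (x + D) = c)
    (hinit : ∀ t ∈ Finset.range D, f t = c) (n : ℕ) : f n = c := by
  induction n using Nat.strong_induction_on with
  | _ n ih =>
    by_cases hn : n < D
    · exact hinit n (Finset.mem_range.2 hn)
    · obtain ⟨x, rfl⟩ : ∃ x, n = x + D := ⟨n - D, by omega⟩
      exact hstep x fun t ht => ih _ (by have := Finset.mem_range.1 ht; omega)

theorem forall_le_eq_of_propagate_down {E m : ℕ}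
    (hstep : ∀ x, (∀ t ∈ Finset.Icc 1 E, f (x + t) = c) → f x = c)
    (hblock : ∀ t ∈ Finset.Icc 1 E, f (m + t) = c) (n : ℕ) (hn : n ≤ m) : f n = c := by
  obtain ⟨d, rfl⟩ : ∃ d, m = n + d := ⟨m - n, by omega⟩
  clear hn
  induction d using Nat.strong_induction_on generalizing n with
  | _ d ih =>
    refine hstep n fun t ht => ?_
    rw [Finset.mem_Icc] at ht
    by_cases htd : t ≤ d
    · exact ih (d - t) (by omega) (n + t) (by rwa [add_assoc, Nat.add_sub_cancel' htd])
    · rw [show n + t = n + d + (t - d) by omega]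
      exact hblock (t - d) (Finset.mem_Icc.2 ⟨by omega, by omega⟩)

end Propagation

section Colouring

variable {κ : Type*} [Finite κ] (φ : ℕ → κ)

theorem exists_mono_ap_of_propagate_up (D : ℕ)
    (hstep : ∀ a > 0, ∀ x c, (∀ t ∈ Finset.range D, φ (x + a * t) = c) → φ (x + a * D) = c) :
    ∃ (b a : ℕ) (c : κ), 1 ≤ a ∧ ∀ n, φ (b + n * a) = c := by
  obtain ⟨a, ha, b, c, hinit⟩ := Combinatorics.exists_mono_homothetic_copy (Finset.range D) φ
  refine ⟨b, a, c, ha, fun n => ?_⟩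
  have hφ : ∀ n, φ (b + a * n) = c := by
    refine forall_eq_of_propagate_up (D := D) (fun x hx => ?_) fun t ht => ?_
    · simpa [mul_add, add_assoc] using hstep a ha (b + a * x) c fun t ht => by
        simpa [mul_add, add_assoc] using hx t ht
    · simpa [add_comm] using hinit t ht
  simpa [mul_comm] using hφ n

theorem exists_mono_translates_frequently (T : Finset ℕ) :
    ∃ a > 0, ∃ (r : ℕ) (c : κ), ∃ᶠ q in atTop, ∀ t ∈ T, φ (r + a * (q + t)) = c := by
  set U := hyperfilter ℕ
  have hlim : ∀ n, ∃ c, ∀ᶠ m in U, φ (m + n) = c := fun n =>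
    U.eventually_exists_iff.1 (.of_forall fun m => ⟨_, rfl⟩)
  choose ψ hψ using hlim
  obtain ⟨a, ha, b, c, hψc⟩ := Combinatorics.exists_mono_homothetic_copy T ψ
  have hblock : ∀ᶠ m in U, ∀ t ∈ T, φ (m + (a • t + b)) = c :=
    (eventually_all_finset T).2 fun t ht => hψc t ht ▸ hψ _
  obtain ⟨r, -, hr⟩ := (U.eventually_exists_mem_iff (P := fun r m => (m + b) % a = r)
    (Set.finite_Iio a)).1 (.of_forall fun m => ⟨(m + b) % a, Nat.mod_lt _ ha, rfl⟩)
  have hfreq := ((hr.and hblock).frequently).filter_mono Nat.hyperfilter_le_atTop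
  refine ⟨a, ha, r, c, frequently_atTop.2 fun N => ?_⟩
  obtain ⟨m, hm, hmr, hmT⟩ := frequently_atTop.1 hfreq (a * N)
  have hdiv := Nat.mod_add_div (m + b) a
  refine ⟨(m + b) / a, (Nat.le_div_iff_mul_le ha).2 (by linarith [mul_comm a N]),
    fun t ht => ?_⟩
  convert hmT t ht using 2
  simp only [smul_eq_mul]
  linarith [mul_add a ((m + b) / a) t]

theorem exists_mono_ap_of_propagate_down (E : ℕ)
    (hstep : ∀ a > 0, ∀ x c, (∀ t ∈ Finset.Icc 1 E, φ (x + a * t) = c) → φ x = c) :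
    ∃ (b a : ℕ) (c : κ), 1 ≤ a ∧ ∀ n, φ (b + n * a) = c := by
  obtain ⟨a, ha, r, c, hfreq⟩ := exists_mono_translates_frequently φ (Finset.Icc 1 E)
  refine ⟨r, a, c, ha, fun n => ?_⟩
  obtain ⟨q, hnq, hq⟩ := frequently_atTop.1 hfreq n
  rw [mul_comm]
  refine forall_le_eq_of_propagate_down (f := fun j => φ (r + a * j)) (fun x hx => ?_) hq n hnq
  exact hstep a ha (r + a * x) c fun t ht => by simpa [mul_add, add_assoc] using hx t ht

end Colouring

def HasAMCopy {κ : Type*} (φ : ℕ → κ) (S : Finset ℤ) (s₀ : ℤ) : Prop :=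
  ∃ (c l : ℝ) (F : ℤ → ℕ), 0 < l ∧ (∀ s ∈ S, (F s : ℝ) = c + l * (s : ℝ)) ∧
    (∃ col, ∀ s ∈ S, s ≠ s₀ → φ (F s) = col) ∧ ¬ ∃ col, ∀ s ∈ S, φ (F s) = col

theorem apply_eq_of_not_hasAMCopy {κ : Type*} {φ : ℕ → κ} {S : Finset ℤ} {s₀ β : ℤ}
    (h : ¬ HasAMCopy φ S s₀) (hS : 1 < S.card) (hs₀ : s₀ ∈ S) (hβ : ∀ s ∈ S, β ≤ s)
    {x a : ℕ} (ha : 0 < a) {c : κ}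
    (hmono : ∀ s ∈ S, s ≠ s₀ → φ (x + a * (s - β).toNat) = c) :
    φ (x + a * (s₀ - β).toNat) = c := by
  obtain ⟨t, htS, hts⟩ := S.exists_mem_ne hS s₀
  have hcopy : ∀ s ∈ S, ((x + a * (s - β).toNat : ℕ) : ℝ) = (x - a * β) + a * s := by
    intro s hs
    have : ((s - β).toNat : ℤ) = s - β := Int.toNat_of_nonneg (by linarith [hβ s hs])
    have : ((s - β).toNat : ℝ) = s - β := by exact_mod_cast this
    push_cast [this]
    ring
  unfold HasAMCopy at h
  push Not at h
  obtain ⟨c', hc'⟩ := h _ _ _ (by exact_mod_cast ha) hcopy ⟨c, hmono⟩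
  rw [hc' s₀ hs₀, ← hmono t htS hts, hc' t htS]

/-- If `S ⊆ ℤ` is finite with `|S| ≥ 3` and `s₀ ∈ S` is an extreme
point of `S` (the minimum or the maximum), then every AP-free finite colouring of
`ℕ` contains an almost-monochromatic positive homothetic copy of `(S, s₀)` lying
in `ℕ`. -/
theorem am_homothet_extreme (S : Finset ℤ) (hcard : 3 ≤ S.card)
    (s₀ : ℤ) (hs₀ : s₀ ∈ S)
    (hext : (∀ x ∈ S, s₀ ≤ x) ∨ (∀ x ∈ S, x ≤ s₀))
    (k : ℕ) (φ : ℕ → Fin k) (hAP : APFreeN φ) :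
    ∃ (c l : ℝ) (F : ℤ → ℕ), 0 < l ∧ (∀ s ∈ S, (F s : ℝ) = c + l * (s : ℝ)) ∧
      (∃ col, ∀ s ∈ S, s ≠ s₀ → φ (F s) = col) ∧ ¬ ∃ col, ∀ s ∈ S, φ (F s) = col := by
  by_contra h
  have hS : 1 < S.card := by omega
  apply hAP
  rcases hext with hmin | hmax
  · obtain ⟨E, hE⟩ : ∃ E : ℕ, ∀ s ∈ S, (s - s₀).toNat ≤ E :=
      ⟨S.sup fun s => (s - s₀).toNat, fun s hs => Finset.le_sup (f := fun s => (s - s₀).toNat) hs⟩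
    refine exists_mono_ap_of_propagate_down φ E fun a ha x c hx => ?_
    simpa using apply_eq_of_not_hasAMCopy h hS hs₀ hmin ha fun s hs hne =>
      hx _ (Finset.mem_Icc.2 ⟨by have := hmin s hs; omega, hE s hs⟩)
  · have hμ : ∀ s ∈ S, S.min' ⟨s₀, hs₀⟩ ≤ s := fun s hs => S.min'_le s hs
    refine exists_mono_ap_of_propagate_up φ (s₀ - S.min' ⟨s₀, hs₀⟩).toNat fun a ha x c hx =>
      apply_eq_of_not_hasAMCopy h hS hs₀ hμ ha fun s hs hne => hx _ (Finset.mem_range.2 ?_)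
    have := hmax s hs
    have := hμ s hs
    omega
end

section
/- Let S ⊆ ℤ be a set with |S| = 3 and let s₀ ∈ S be arbitrary. Then every AP-free finite colouring of ℕ contains an almost-monochromatic positive homothetic copy of (S, s₀) lying in ℕ. -/
/-!
Write `S = {p < q < r}`, `d₁ = q - p`, `d₂ = r - q`; a positive homothetic copy of `S` in `ℕ` is a
triple `x, x + m d₁, x + m (d₁ + d₂)` with `m > 0`. Every case starts from a long monochromatic
progression (van der Waerden) and the first point where AP-freeness breaks it.

* `s₀ = r`: end the triple at the break.
* `s₀ = p`: if no triple has its outlier first, every monochromatic run of length `d₁ + d₂ + 1`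
  propagates to the left through its whole residue class. Finitary van der Waerden (via
  Hales–Jewett) gives such runs beyond every threshold with uniformly bounded step, and the
  pigeonhole principle then produces an infinite monochromatic progression.
* `s₀ = q`: induction on the set of colours. Take the run's step divisible by `d₁` and follow a
  progression `z + t g` from the break `z`. If the run's colour reappears on it, the first
  reappearance ends a triple whose first point lies on the run and whose middle point precedes
  that reappearance; otherwise the colouring restricted to this progression is AP-free and misses
  a colour.
-/

def APFree {κ : Type*} (φ : ℕ → κ) : Prop :=
  ¬ ∃ (a t : ℕ) (c : κ), 1 ≤ t ∧ ∀ n : ℕ, φ (a + n * t) = c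

def AlmostMono {α κ : Type*} (c : α → κ) (S : Finset α) (s₀ : α) : Prop :=
  (∃ col, ∀ s ∈ S, s ≠ s₀ → c s = col) ∧ ¬ ∃ col, ∀ s ∈ S, c s = col

theorem almostMono_triple_iff {α κ : Type*} [DecidableEq α] {c : α → κ} {a b d : α}
    (hab : a ≠ b) (had : a ≠ d) : AlmostMono c {a, b, d} a ↔ c b = c d ∧ c a ≠ c b := by
  simp only [AlmostMono, Finset.mem_insert, Finset.mem_singleton, forall_eq_or_imp, forall_eq,
    ne_eq, not_true_eq_false, IsEmpty.forall_iff, true_and, hab.symm, had.symm, not_false_eq_true,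
    forall_const, not_exists, not_and]
  constructor
  · rintro ⟨⟨col, rfl, hd⟩, hnot⟩
    exact ⟨hd.symm, fun h => hnot _ h rfl hd⟩
  · rintro ⟨hbd, hab⟩
    exact ⟨⟨c b, rfl, hbd.symm⟩, fun col ha hb _ => hab (ha.trans hb.symm)⟩

theorem Finset.exists_lt_lt_eq_of_card_eq_three {α : Type*} [LinearOrder α] {S : Finset α}
    (h : S.card = 3) : ∃ p q r, p < q ∧ q < r ∧ S = {p, q, r} := by
  set e := S.orderEmbOfFin h
  refine ⟨e 0, e 1, e 2, e.strictMono (by decide), e.strictMono (by decide), ?_⟩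
  ext s
  rw [← Finset.mem_coe, ← S.range_orderEmbOfFin h]
  simp only [Set.mem_range, Fin.exists_fin_succ, Fin.exists_fin_zero, Finset.mem_insert,
    Finset.mem_singleton, or_false, eq_comm]
  rfl

open Combinatorics in
theorem exists_mono_ap_with_bounded_step (κ : Type*) [Finite κ] (l : ℕ) :
    ∃ W, ∀ (φ : ℕ → κ) (T : ℕ), ∃ b e, T ≤ b ∧ 0 < e ∧ e ≤ W ∧
      ∀ i ≤ l, φ (b + i * e) = φ b := by
  classical
  obtain ⟨ι, _, hι⟩ := Line.exists_mono_in_high_dimension (Fin (l + 1)) κ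
  refine ⟨Fintype.card ι, fun φ T => ?_⟩
  obtain ⟨L, c, hL⟩ := hι fun v => φ (T + ∑ i, (v i : ℕ))
  set s : Finset ι := {i | L.idxFun i = none}
  -- Summing coordinates turns a line into a progression whose step counts its moving coordinates.
  have hsum : ∀ x : Fin (l + 1), ∑ i, (L x i : ℕ) = ∑ i, (L 0 i : ℕ) + x * s.card := by
    intro x
    rw [Finset.card_filter, Finset.mul_sum, ← Finset.sum_add_distrib]
    refine Finset.sum_congr rfl fun i _ => ?_
    cases h : L.idxFun i <;> simp [h]
  refine ⟨T + ∑ i, (L 0 i : ℕ), s.card, le_self_add, ?_, Finset.card_le_univ s, fun i hi => ?_⟩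
  · obtain ⟨i, hi⟩ := L.proper
    exact Finset.card_pos.2 ⟨i, by simpa [s] using hi⟩
  · have h0 := hL 0
    have hi := hL ⟨i, by omega⟩
    dsimp only at h0 hi
    rw [hsum] at h0 hi
    rw [Fin.val_zero, zero_mul, add_zero] at h0
    rw [← add_assoc] at hi
    exact hi.trans h0.symm

theorem Set.Finite.exists_forall_of_antitone {ι : Type*} {s : Set ι} (hs : s.Finite)
    {P : ι → ℕ → Prop} (hP : ∀ i, Antitone (P i)) (h : ∀ T, ∃ i ∈ s, P i T) :
    ∃ i ∈ s, ∀ T, P i T := by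
  by_contra! H
  have hbad : ∀ᶠ T in Filter.atTop, ∀ i ∈ s, ¬ P i T :=
    (Filter.eventually_all_finite hs).2 fun i hi => by
      obtain ⟨T₀, hT₀⟩ := H i hi
      exact Filter.eventually_atTop.2 ⟨T₀, fun T hT hPT => hT₀ (hP i hT hPT)⟩
  obtain ⟨T, hT⟩ := hbad.exists
  obtain ⟨i, hi, hPi⟩ := h T
  exact hT i hi hPi

theorem Nat.forall_le_of_propagate_down {P : ℕ → Prop} {M d₁ D : ℕ} (hd₁ : 0 < d₁)
    (hd : d₁ ≤ D) (hrun : ∀ i ≤ D, P (M + i)) (hstep : ∀ t, P (t + d₁) → P (t + D) → P t) :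
    ∀ t ≤ M + D, P t := by
  intro t ht
  induction hn : M + D - t using Nat.strong_induction_on generalizing t with
  | _ n ih =>
    by_cases hM : M ≤ t
    · simpa [show M + (t - M) = t by omega] using hrun (t - M) (by omega)
    · exact hstep t (ih _ (by omega) _ (by omega) rfl) (ih _ (by omega) _ (by omega) rfl)

theorem Nat.exists_lt_add_eq_add_mul {D n t : ℕ} (hD : 0 < D) (hn : D ≤ n) (ht : 0 < t) :
    ∃ s j, j < n ∧ j + t = n + s * D := by
  have hex : ∃ s, t ≤ n + s * D := ⟨t, by nlinarith⟩
  refine ⟨Nat.find hex, n + Nat.find hex * D - t, ?_, by have := Nat.find_spec hex; omega⟩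
  rcases h : Nat.find hex with _ | s
  · omega
  · have := Nat.find_min hex (h ▸ lt_add_one s)
    rw [Nat.succ_mul]
    omega

namespace APFree

variable {κ : Type*} {φ : ℕ → κ}

theorem exists_ne (hφ : APFree φ) (a : ℕ) {t : ℕ} (ht : 0 < t) : ∃ n, φ (a + n * t) ≠ φ a := by
  by_contra! h
  exact hφ ⟨a, t, φ a, ht, h⟩

theorem comp_affine (hφ : APFree φ) (a : ℕ) {g : ℕ} (hg : 0 < g) :
    APFree fun n => φ (a + n * g) := by
  rintro ⟨b, t, c, ht, h⟩
  refine hφ ⟨a + b * g, t * g, c, Nat.mul_pos ht hg, fun n => ?_⟩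
  rw [← h n]
  ring_nf

theorem exists_run_then_break [Finite κ] (hφ : APFree φ) (l : ℕ) {Q : ℕ} (hQ : 0 < Q) :
    ∃ b e n, 0 < e ∧ Q ∣ e ∧ l < n ∧ (∀ i < n, φ (b + i * e) = φ b) ∧ φ (b + n * e) ≠ φ b := by
  classical
  obtain ⟨W, hW⟩ := exists_mono_ap_with_bounded_step κ l
  obtain ⟨b, e, -, he, -, hrun⟩ := hW (fun n => φ (Q * n)) 0
  have hQe : 0 < Q * e := Nat.mul_pos hQ he
  have hex := hφ.exists_ne (Q * b) hQe
  refine ⟨Q * b, Q * e, Nat.find hex, hQe, dvd_mul_right Q e, ?_,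
    fun i hi => not_not.1 (Nat.find_min hex hi), Nat.find_spec hex⟩
  by_contra! hn
  refine Nat.find_spec hex ?_
  simpa [mul_add, mul_left_comm] using hrun _ hn

theorem exists_outlier_last [Finite κ] (hφ : APFree φ) (d₁ : ℕ) {d₂ : ℕ} (hd₂ : 0 < d₂) :
    ∃ x m, 0 < m ∧ φ x = φ (x + m * d₁) ∧ φ (x + m * (d₁ + d₂)) ≠ φ x := by
  obtain ⟨b, e, n, he, -, hn, hrun, hbreak⟩ := hφ.exists_run_then_break (d₁ + d₂) one_pos
  obtain ⟨k, rfl⟩ := Nat.exists_eq_add_of_lt hn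
  refine ⟨b + (k + 1) * e, e, he, ?_, ?_⟩
  · rw [hrun _ (by omega), show b + (k + 1) * e + e * d₁ = b + (k + 1 + d₁) * e by ring,
      hrun _ (by omega)]
  · rw [hrun _ (by omega),
      show b + (k + 1) * e + e * (d₁ + d₂) = b + (d₁ + d₂ + k + 1) * e by ring]
    exact hbreak

theorem exists_outlier_first [Finite κ] (hφ : APFree φ) {d₁ : ℕ} (hd₁ : 0 < d₁) (d₂ : ℕ) :
    ∃ x m, 0 < m ∧ φ (x + m * d₁) = φ (x + m * (d₁ + d₂)) ∧ φ x ≠ φ (x + m * d₁) := by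
  by_contra! H
  obtain ⟨W, hW⟩ := exists_mono_ap_with_bounded_step κ (d₁ + d₂)
  let good : ℕ × ℕ × κ → ℕ → Prop := fun ⟨ρ, e, c⟩ T =>
    0 < e ∧ ∀ t, ρ + t * e ≤ T → φ (ρ + t * e) = c
  have hfin : (Set.Iio W ×ˢ Set.Iic W ×ˢ Set.univ : Set (ℕ × ℕ × κ)).Finite :=
    (Set.finite_Iio W).prod ((Set.finite_Iic W).prod Set.finite_univ)
  have hanti : ∀ i, Antitone (good i) := fun ⟨ρ, e, c⟩ T T' hT ⟨he, h⟩ =>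
    ⟨he, fun t ht => h t (ht.trans hT)⟩
  obtain ⟨⟨ρ, e, c⟩, -, hgood⟩ := hfin.exists_forall_of_antitone hanti fun T => by
    obtain ⟨b, e, hTb, he, heW, hrun⟩ := hW φ T
    have hb : b % e + b / e * e = b := by rw [mul_comm]; exact Nat.mod_add_div b e
    have hext : ∀ t ≤ b / e + (d₁ + d₂), φ (b % e + t * e) = φ b := by
      refine Nat.forall_le_of_propagate_down hd₁ (Nat.le_add_right d₁ d₂) (fun i hi => ?_)
        fun t h₁ h₂ => ?_
      · rw [← hrun i hi, add_mul, ← add_assoc, hb]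
      · have e₁ : b % e + t * e + e * d₁ = b % e + (t + d₁) * e := by ring
        have e₂ : b % e + t * e + e * (d₁ + d₂) = b % e + (t + (d₁ + d₂)) * e := by ring
        rw [H _ e he (by rw [e₁, e₂, h₁, h₂]), e₁, h₁]
    refine ⟨⟨b % e, e, φ b⟩, ⟨?_, heW, trivial⟩, he, fun t ht => hext t ?_⟩
    · exact (Nat.mod_lt b he).trans_le heW
    · have : t * e ≤ b / e * e := by omega
      exact (Nat.le_of_mul_le_mul_right this he).trans (Nat.le_add_right _ _)
  exact hφ ⟨ρ, e, c, (hgood 0).1, fun t => (hgood (ρ + t * e)).2 t le_rfl⟩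

theorem exists_outlier_middle_of_return {b n d₁ d₂ f : ℕ} (hn : d₁ + d₂ ≤ n)
    (hrun : ∀ i < n, φ (b + i * (d₁ * f)) = φ b) (hbreak : φ (b + n * (d₁ * f)) ≠ φ b)
    (hret : ∃ t, φ (b + n * (d₁ * f) + t * (f * d₂)) = φ b) :
    ∃ x m, 0 < m ∧ φ x = φ (x + m * (d₁ + d₂)) ∧ φ (x + m * d₁) ≠ φ x := by
  classical
  have he : 0 < d₁ * f := Nat.pos_of_ne_zero fun h => hbreak (by rw [h, mul_zero, add_zero])
  have hd₁ : 0 < d₁ := Nat.pos_of_mul_pos_right he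
  obtain ⟨t, hret, hmin⟩ : ∃ t, φ (b + n * (d₁ * f) + t * (f * d₂)) = φ b ∧
      ∀ t' < t, φ (b + n * (d₁ * f) + t' * (f * d₂)) ≠ φ b :=
    ⟨Nat.find hret, Nat.find_spec hret, fun _ => Nat.find_min hret⟩
  have ht : 0 < t := Nat.pos_of_ne_zero <| by rintro rfl; exact hbreak (by simpa using hret)
  obtain ⟨s, j, hj, hjt⟩ := Nat.exists_lt_add_eq_add_mul (by omega) hn ht
  have hsd₁ : s * d₁ < t := by
    have := Nat.mul_le_mul_left s (Nat.le_add_right d₁ d₂)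
    omega
  obtain ⟨μ, hμ, rfl⟩ : ∃ μ, 0 < μ ∧ t = μ + s * d₁ := ⟨t - s * d₁, by omega, by omega⟩
  -- With `z = b + n d₁ f` and `g = f d₂`: the triple starts on the run at `b + j d₁ f`, and its
  -- middle point `z + s d₁ g` precedes its last point, the first return `z + t g`.
  refine ⟨b + j * (d₁ * f), f * μ, Nat.mul_pos (Nat.pos_of_mul_pos_left he) hμ, ?_, ?_⟩
  · rw [hrun j hj, ← hret]
    congr 1
    linear_combination (d₁ * f) * hjt.symm
  · rw [hrun j hj]
    convert hmin (s * d₁) (by omega) using 2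
    linear_combination (d₁ * f) * hjt

theorem exists_outlier_middle [Finite κ] (hφ : APFree φ) {d₁ d₂ : ℕ} (hd₁ : 0 < d₁)
    (hd₂ : 0 < d₂) :
    ∃ x m, 0 < m ∧ φ x = φ (x + m * (d₁ + d₂)) ∧ φ (x + m * d₁) ≠ φ x := by
  classical
  have := Fintype.ofFinite κ
  suffices ∀ (C : Finset κ) (φ : ℕ → κ), (∀ n, φ n ∈ C) → APFree φ →
      ∃ x m, 0 < m ∧ φ x = φ (x + m * (d₁ + d₂)) ∧ φ (x + m * d₁) ≠ φ x from
    this Finset.univ φ (fun _ => Finset.mem_univ _) hφ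
  intro C
  induction C using Finset.strongInduction with
  | H C ih =>
  intro φ hC hφ
  obtain ⟨b, _, n, he, ⟨f, rfl⟩, hn, hrun, hbreak⟩ := hφ.exists_run_then_break (d₁ + d₂) hd₁
  have hf : 0 < f := Nat.pos_of_mul_pos_left he
  by_cases hret : ∃ t, φ (b + n * (d₁ * f) + t * (f * d₂)) = φ b
  · exact exists_outlier_middle_of_return hn.le hrun hbreak hret
  push Not at hret
  set z := b + n * (d₁ * f)
  have hg : 0 < f * d₂ := Nat.mul_pos hf hd₂
  obtain ⟨X, M, hM, hEq, hNe⟩ := ih (C.erase (φ b)) (Finset.erase_ssubset (hC b))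
    (fun t => φ (z + t * (f * d₂))) (fun t => Finset.mem_erase.2 ⟨hret t, hC _⟩)
    (hφ.comp_affine z hg)
  have key : ∀ d, z + (X + M * d) * (f * d₂) = z + X * (f * d₂) + M * (f * d₂) * d :=
    fun d => by ring
  exact ⟨z + X * (f * d₂), M * (f * d₂), Nat.mul_pos hM hg, by rwa [← key], by rwa [← key]⟩

end APFree

/-- If `S ⊆ ℤ` has `|S| = 3` and `s₀ ∈ S` is arbitrary, then every
AP-free finite colouring of `ℕ` contains an almost-monochromatic positive
homothetic copy of `(S, s₀)` lying in `ℕ`. -/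
theorem am_homothet_three (S : Finset ℤ) (hcard : S.card = 3)
    (s₀ : ℤ) (hs₀ : s₀ ∈ S)
    (k : ℕ) (φ : ℕ → Fin k) (hAP : APFreeN φ) :
    ∃ (c l : ℝ) (F : ℤ → ℕ), 0 < l ∧ (∀ s ∈ S, (F s : ℝ) = c + l * (s : ℝ)) ∧
      (∃ col, ∀ s ∈ S, s ≠ s₀ → φ (F s) = col) ∧ ¬ ∃ col, ∀ s ∈ S, φ (F s) = col := by
  obtain ⟨p, q, r, hpq, hqr, rfl⟩ := Finset.exists_lt_lt_eq_of_card_eq_three hcard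
  suffices ∃ x m : ℕ, 0 < m ∧ AlmostMono (fun s => φ (x + m * (s - p).toNat)) {p, q, r} s₀ by
    obtain ⟨x, m, hm, hAM⟩ := this
    refine ⟨x - m * p, m, fun s => x + m * (s - p).toNat, by positivity, fun s hs => ?_, hAM⟩
    have hps : p ≤ s := by simp only [Finset.mem_insert, Finset.mem_singleton] at hs; omega
    have h : ((s - p).toNat : ℤ) = s - p := Int.toNat_of_nonneg (by omega)
    have : ((s - p).toNat : ℝ) = s - p := by exact_mod_cast h
    push_cast [this]
    ring
  have hd₁ : 0 < (q - p).toNat := by omega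
  have hd₂ : 0 < (r - q).toNat := by omega
  have hr : (r - p).toNat = (q - p).toNat + (r - q).toNat := by omega
  simp only [Finset.mem_insert, Finset.mem_singleton] at hs₀
  rcases hs₀ with rfl | rfl | rfl
  · obtain ⟨x, m, hm, h⟩ := APFree.exists_outlier_first hAP hd₁ (r - q).toNat
    exact ⟨x, m, hm, (almostMono_triple_iff hpq.ne (hpq.trans hqr).ne).2 (by simpa [hr] using h)⟩
  · obtain ⟨x, m, hm, h⟩ := APFree.exists_outlier_middle hAP hd₁ hd₂
    rw [Finset.insert_comm]
    exact ⟨x, m, hm, (almostMono_triple_iff hpq.ne' hqr.ne).2 (by simpa [hr] using h)⟩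
  · obtain ⟨x, m, hm, h⟩ := APFree.exists_outlier_last hAP (q - p).toNat hd₂
    rw [Finset.pair_comm, Finset.insert_comm]
    exact ⟨x, m, hm, (almostMono_triple_iff (hpq.trans hqr).ne' hqr.ne').2 (by simpa [hr] using h)⟩
end

section
/- Let S ⊆ ℝ be finite with |S| > 3 and let s₀ ∈ S satisfy min S < s₀ < max S (s₀ is not an extreme point of S). Then there exists an AP-free finite colouring of ℝ containing no almost-monochromatic positive homothetic copy of (S, s₀). -/
/-- A colouring of `ℝ` is AP-free if no infinite arithmetic progression
`{a + n·t : n ∈ ℕ}` with `t ≠ 0` is monochromatic. -/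
def APFreeR {k : ℕ} (φ : ℝ → Fin k) : Prop :=
  ¬ ∃ (a t : ℝ) (c : Fin k), t ≠ 0 ∧ ∀ n : ℕ, φ (a + (n : ℝ) * t) = c


noncomputable def idxC (C x : ℝ) : ℤ := ⌊Real.log x / Real.log C⌋

lemma zpow_le_iff_le_idxC {C x : ℝ} (hC : 1 < C) (hx : 0 < x) (n : ℤ) :
    C ^ n ≤ x ↔ n ≤ idxC C x := by
  have hC0 : (0:ℝ) < C := lt_trans one_pos hC
  have hlogC : 0 < Real.log C := Real.log_pos hC
  rw [idxC, Int.le_floor, le_div_iff₀ hlogC]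
  rw [show (n:ℝ) * Real.log C = Real.log (C ^ n) by rw [Real.log_zpow]]
  exact (Real.log_le_log_iff (zpow_pos hC0 n) hx).symm

lemma zpow_idxC_le {C x : ℝ} (hC : 1 < C) (hx : 0 < x) : C ^ (idxC C x) ≤ x :=
  (zpow_le_iff_le_idxC hC hx _).mpr le_rfl

lemma lt_zpow_idxC_succ {C x : ℝ} (hC : 1 < C) (hx : 0 < x) : x < C ^ (idxC C x + 1) := by
  by_contra h
  push_neg at h
  have := (zpow_le_iff_le_idxC hC hx _).mp h
  omega

lemma idxC_mono {C x y : ℝ} (hC : 1 < C) (hx : 0 < x) (hxy : x ≤ y) :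
    idxC C x ≤ idxC C y := by
  have hy : 0 < y := lt_of_lt_of_le hx hxy
  exact (zpow_le_iff_le_idxC hC hy _).mp (le_trans (zpow_idxC_le hC hx) hxy)

lemma idxC_eq {C x : ℝ} (hC : 1 < C) {n : ℤ} (h1 : C ^ n ≤ x) (h2 : x < C ^ (n+1)) :
    idxC C x = n := by
  have hC0 : (0:ℝ) < C := lt_trans one_pos hC
  have hx : 0 < x := lt_of_lt_of_le (zpow_pos hC0 n) h1
  have l1 := (zpow_le_iff_le_idxC hC hx n).mp h1
  have l2 : ¬ (n+1 ≤ idxC C x) := by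
    intro h
    exact absurd ((zpow_le_iff_le_idxC hC hx _).mpr h) (not_le.mpr h2)
  omega

noncomputable def colR (C : ℝ) (k : ℕ) (x : ℝ) : Fin (2*(k+2)+1) :=
  if 0 < x then ⟨(idxC C x % ((k:ℤ)+2)).toNat, by
    have h1 := Int.emod_nonneg (idxC C x) (by omega : ((k:ℤ)+2) ≠ 0)
    have h2 := Int.emod_lt_of_pos (idxC C x) (by omega : (0:ℤ) < (k:ℤ)+2)
    omega⟩
  else if x < 0 then ⟨(k+2) + (idxC C (-x) % ((k:ℤ)+2)).toNat, by
    have h1 := Int.emod_nonneg (idxC C (-x)) (by omega : ((k:ℤ)+2) ≠ 0)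
    have h2 := Int.emod_lt_of_pos (idxC C (-x)) (by omega : (0:ℤ) < (k:ℤ)+2)
    omega⟩
  else ⟨2*(k+2), by omega⟩

lemma colR_pos {C : ℝ} {k : ℕ} {x : ℝ} (hx : 0 < x) :
    (colR C k x).val = (idxC C x % ((k:ℤ)+2)).toNat := by
  rw [colR, if_pos hx]

lemma colR_neg {C : ℝ} {k : ℕ} {x : ℝ} (hx : x < 0) :
    (colR C k x).val = (k+2) + (idxC C (-x) % ((k:ℤ)+2)).toNat := by
  rw [colR, if_neg (by linarith), if_pos hx]

lemma colR_zero {C : ℝ} {k : ℕ} : (colR C k 0).val = 2*(k+2) := by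
  rw [colR, if_neg (lt_irrefl 0), if_neg (lt_irrefl 0)]

lemma emod_eq_of_colR_pos_eq {C : ℝ} {k : ℕ} {x y : ℝ} (hx : 0 < x) (hy : 0 < y)
    (h : colR C k x = colR C k y) :
    idxC C x % ((k:ℤ)+2) = idxC C y % ((k:ℤ)+2) := by
  have hh := congrArg Fin.val h
  rw [colR_pos hx, colR_pos hy] at hh
  have h1 := Int.emod_nonneg (idxC C x) (by omega : ((k:ℤ)+2) ≠ 0)
  have h2 := Int.emod_nonneg (idxC C y) (by omega : ((k:ℤ)+2) ≠ 0)
  omega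

lemma emod_eq_of_colR_neg_eq {C : ℝ} {k : ℕ} {x y : ℝ} (hx : x < 0) (hy : y < 0)
    (h : colR C k x = colR C k y) :
    idxC C (-x) % ((k:ℤ)+2) = idxC C (-y) % ((k:ℤ)+2) := by
  have hh := congrArg Fin.val h
  rw [colR_neg hx, colR_neg hy] at hh
  have h1 := Int.emod_nonneg (idxC C (-x)) (by omega : ((k:ℤ)+2) ≠ 0)
  have h2 := Int.emod_nonneg (idxC C (-y)) (by omega : ((k:ℤ)+2) ≠ 0)
  omega

lemma key {C : ℝ} (hC : 1 < C) {k : ℕ} {ρ A Q B : ℝ}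
    (hρ0 : 0 < ρ) (hρ1 : ρ < 1)
    (h1 : ρ*C + C^((1:ℤ) - ((k:ℤ)+2)) < 1)
    (h2 : C^((1:ℤ) - ((k:ℤ)+2)) < ρ)
    (hA : 0 < A) (hAB : A < B) (hQ : Q = ρ*B + (1-ρ)*A)
    (dAB : ((k:ℤ)+2) ∣ idxC C B - idxC C A)
    (dQB : ((k:ℤ)+2) ∣ idxC C B - idxC C Q) :
    idxC C A = idxC C B := by
  have hC0 : (0:ℝ) < C := lt_trans one_pos hC
  have hB : 0 < B := lt_trans hA hAB
  have hQpos : 0 < Q := by nlinarith [mul_pos hρ0 hB, mul_pos (by linarith : (0:ℝ) < 1-ρ) hA]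
  have hQB : Q < B := by nlinarith
  by_contra hne
  have hmn : idxC C A ≤ idxC C B := idxC_mono hC hA (le_of_lt hAB)
  have hgap : (k:ℤ)+2 ≤ idxC C B - idxC C A := Int.le_of_dvd (by omega) dAB
  set m := idxC C A with hm
  set n := idxC C B with hn
  set p := idxC C Q with hp
  have hQlb : ρ * B ≤ Q := by nlinarith
  have e1 : C ^ (n - ((k:ℤ)+1)) = C ^ ((1:ℤ) - ((k:ℤ)+2)) * C ^ n := by
    rw [← zpow_add₀ (ne_of_gt hC0)]; ring_nf
  have hCn_le_B : C ^ n ≤ B := zpow_idxC_le hC hB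
  have hQ_lb2 : C ^ (n - ((k:ℤ)+1)) ≤ Q := by
    rw [e1]
    calc C ^ ((1:ℤ)-((k:ℤ)+2)) * C ^ n ≤ ρ * C ^ n :=
          mul_le_mul_of_nonneg_right (le_of_lt h2) (le_of_lt (zpow_pos hC0 n))
      _ ≤ ρ * B := mul_le_mul_of_nonneg_left hCn_le_B (le_of_lt hρ0)
      _ ≤ Q := hQlb
  have hp_lb : n - ((k:ℤ)+1) ≤ p := (zpow_le_iff_le_idxC hC hQpos _).mp hQ_lb2
  have hp_ub : p ≤ n := idxC_mono hC hQpos (le_of_lt hQB)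
  have hpn : p = n := by
    by_cases hz : n - p = 0
    · omega
    · have := Int.le_of_dvd (by omega) dQB
      omega
  have hCn_le_Q : C ^ n ≤ Q := by rw [← hpn]; exact zpow_idxC_le hC hQpos
  have hBub : B < C ^ (n+1) := lt_zpow_idxC_succ hC hB
  have hAub : A < C ^ (m+1) := lt_zpow_idxC_succ hC hA
  have hm1 : C ^ (m+1) ≤ C ^ (n - ((k:ℤ)+1)) := by
    apply zpow_le_zpow_right₀ (le_of_lt hC)
    omega
  have e2 : C ^ ((n:ℤ)+1) = C * C ^ n := by
    rw [zpow_add_one₀ (ne_of_gt hC0)]; ring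
  have hlast : Q < C ^ n := by
    have a1 : (1-ρ)*A ≤ A := by nlinarith
    have a2 : ρ * B < ρ * (C * C^n) := by
      rw [← e2]; exact (mul_lt_mul_iff_right₀ hρ0).mpr hBub
    have a3 : A < C ^ ((1:ℤ)-((k:ℤ)+2)) * C ^ n := by
      rw [← e1]; exact lt_of_lt_of_le hAub hm1
    have a4 : (ρ*C + C^((1:ℤ)-((k:ℤ)+2))) * C ^ n < 1 * C ^ n :=
      mul_lt_mul_of_pos_right h1 (zpow_pos hC0 n)
    nlinarith [zpow_pos hC0 n]
  linarith

lemma exists_term_mem {a t u v : ℝ} (ht : 0 < t) (hu : a < u) (huv : u + t ≤ v) :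
    ∃ n : ℕ, u ≤ a + n * t ∧ a + n * t < v := by
  classical
  have hex : ∃ n : ℕ, u ≤ a + n * t := by
    obtain ⟨n, hn⟩ := exists_nat_gt ((u - a)/t)
    refine ⟨n, ?_⟩
    rw [div_lt_iff₀ ht] at hn
    linarith
  have hn := Nat.find_spec hex
  have hn0 : Nat.find hex ≠ 0 := by
    intro h
    rw [h] at hn
    push_cast at hn
    linarith
  obtain ⟨m, hmeq⟩ := Nat.exists_eq_succ_of_ne_zero hn0
  have hm := Nat.find_min hex (by omega : m < Nat.find hex)
  push_neg at hm
  rw [hmeq] at hn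
  refine ⟨m+1, hn, ?_⟩
  push_cast at hm ⊢
  linarith

/-- In the positive direction, an AP hits two consecutive scale intervals. -/
lemma exists_idx_succ {C : ℝ} (hC : 1 < C) {a t : ℝ} (ht : 0 < t) :
    ∃ (n₁ n₂ : ℕ) (N : ℤ), 0 < a + n₁*t ∧ 0 < a + n₂*t ∧
      idxC C (a + n₁*t) = N ∧ idxC C (a + n₂*t) = N+1 := by
  have hC0 : (0:ℝ) < C := lt_trans one_pos hC
  obtain ⟨M, hM⟩ := pow_unbounded_of_one_lt (max a (t / (C-1))) hC
  have hMa : a < C ^ M := lt_of_le_of_lt (le_max_left _ _) hM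
  have hMt : t ≤ C ^ M * (C - 1) := by
    have h := lt_of_le_of_lt (le_max_right _ _) hM
    rw [div_lt_iff₀ (by linarith)] at h
    linarith
  set u0 : ℝ := C ^ ((M:ℤ)) with hu0
  set u1 : ℝ := C ^ ((M:ℤ)+1) with hu1
  set u2 : ℝ := C ^ ((M:ℤ)+2) with hu2
  have hu0p : 0 < u0 := zpow_pos hC0 _
  have hu1p : 0 < u1 := zpow_pos hC0 _
  have e0 : u0 = C ^ M := by rw [hu0, zpow_natCast]
  have e1 : u1 = C * u0 := by rw [hu1, hu0, zpow_add_one₀ (ne_of_gt hC0)]; ring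
  have e2 : u2 = C * u1 := by
    rw [hu2, hu1, show ((M:ℤ)+2) = ((M:ℤ)+1)+1 by ring, zpow_add_one₀ (ne_of_gt hC0)]; ring
  have hau0 : a < u0 := by rw [e0]; exact hMa
  have htu0 : t ≤ u0 * (C-1) := by rw [e0]; exact hMt
  have hlen1 : u0 + t ≤ u1 := by rw [e1]; nlinarith
  have hu01 : u0 < u1 := by nlinarith
  have hlen2 : u1 + t ≤ u2 := by rw [e2]; nlinarith
  obtain ⟨n₁, h1l, h1r⟩ := exists_term_mem ht hau0 hlen1
  obtain ⟨n₂, h2l, h2r⟩ := exists_term_mem ht (lt_trans hau0 hu01) hlen2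
  refine ⟨n₁, n₂, (M:ℤ), lt_of_lt_of_le hu0p h1l, lt_of_lt_of_le hu1p h2l, ?_, ?_⟩
  · exact idxC_eq hC h1l h1r
  · exact idxC_eq hC h2l (by rw [show ((M:ℤ)+1)+1 = (M:ℤ)+2 by ring]; exact h2r)

lemma consec_contra {k : ℕ} {N : ℤ} (h : N % ((k:ℤ)+2) = (N+1) % ((k:ℤ)+2)) : False := by
  have hd : ((k:ℤ)+2) ∣ (N+1) - N := Int.ModEq.dvd h
  simp only [add_sub_cancel_left] at hd
  have := Int.le_of_dvd (by omega) hd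
  omega

lemma colR_apfree {C : ℝ} (hC : 1 < C) (k : ℕ) : APFreeR (colR C k) := by
  rintro ⟨a, t, c, ht, hmono⟩
  rcases lt_or_gt_of_ne ht with htneg | htpos
  · -- t < 0 : look at negatives
    obtain ⟨n₁, n₂, N, hx, hy, ix, iy⟩ := exists_idx_succ hC (a := -a) (by linarith : (0:ℝ) < -t)
    have ex : -a + (n₁:ℝ)*(-t) = -(a + n₁*t) := by ring
    have ey : -a + (n₂:ℝ)*(-t) = -(a + n₂*t) := by ring
    rw [ex] at hx ix
    rw [ey] at hy iy
    have hcc : colR C k (a + n₁*t) = colR C k (a + n₂*t) := (hmono n₁).trans (hmono n₂).symm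
    have hmod := emod_eq_of_colR_neg_eq (by linarith) (by linarith) hcc
    rw [ix, iy] at hmod
    exact consec_contra hmod
  · obtain ⟨n₁, n₂, N, hx, hy, ix, iy⟩ := exists_idx_succ hC (a := a) htpos
    have hcc : colR C k (a + n₁*t) = colR C k (a + n₂*t) := (hmono n₁).trans (hmono n₂).symm
    have hmod := emod_eq_of_colR_pos_eq hx hy hcc
    rw [ix, iy] at hmod
    exact consec_contra hmod

set_option maxHeartbeats 2000000 in
/-- If `S ⊆ ℝ` is finite with `|S| > 3` and `s₀ ∈ S` is not an
extreme point of `S` (i.e. `min S < s₀ < max S`), then there is an AP-free finite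
colouring of `ℝ` with no almost-monochromatic positive homothetic copy of
`(S, s₀)`. -/
theorem no_am_homothet_nonextreme (S : Finset ℝ) (hcard : 3 < S.card)
    (s₀ : ℝ) (hs₀ : s₀ ∈ S)
    (hlow : ∃ x ∈ S, x < s₀) (hhigh : ∃ y ∈ S, s₀ < y) :
    ∃ (k : ℕ) (φ : ℝ → Fin k), APFreeR φ ∧
      ¬ ∃ (c l : ℝ), 0 < l ∧
        (∃ col, ∀ s ∈ S, s ≠ s₀ → φ (c + l * s) = col) ∧
        ¬ ∃ col, ∀ s ∈ S, φ (c + l * s) = col := by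
  have hS : S.Nonempty := ⟨s₀, hs₀⟩
  set a := S.min' hS with ha
  set b := S.max' hS with hb
  have haS : a ∈ S := S.min'_mem hS
  have hbS : b ∈ S := S.max'_mem hS
  have hmin : ∀ s ∈ S, a ≤ s := fun s hs => S.min'_le s hs
  have hmax : ∀ s ∈ S, s ≤ b := fun s hs => S.le_max' s hs
  clear_value a b
  have has₀ : a < s₀ := by
    obtain ⟨x, hx, hxs⟩ := hlow
    exact lt_of_le_of_lt (hmin x hx) hxs
  have hs₀b : s₀ < b := by
    obtain ⟨y, hy, hys⟩ := hhigh
    exact lt_of_lt_of_le hys (hmax y hy)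
  -- find a fourth point q
  have hq : (S \ {a, b, s₀}).Nonempty := by
    rw [← Finset.card_pos]
    have h1 := Finset.card_le_card_sdiff_add_card (s := S) (t := ({a, b, s₀} : Finset ℝ))
    have h2 : ({a, b, s₀} : Finset ℝ).card ≤ 3 := by
      apply le_trans (Finset.card_insert_le _ _)
      apply Nat.succ_le_succ
      apply le_trans (Finset.card_insert_le _ _)
      simp
    omega
  obtain ⟨q, hq'⟩ := hq
  rw [Finset.mem_sdiff] at hq'
  obtain ⟨hqS, hqne⟩ := hq'
  simp only [Finset.mem_insert, Finset.mem_singleton] at hqne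
  push_neg at hqne
  obtain ⟨hqa, hqb, hqs₀⟩ := hqne
  have haq : a < q := lt_of_le_of_ne (hmin q hqS) (Ne.symm hqa)
  have hqb' : q < b := lt_of_le_of_ne (hmax q hqS) hqb
  have hab : a < b := lt_trans haq hqb'
  have habpos : (0:ℝ) < b - a := by linarith
  -- the ratio and constants
  set ρ : ℝ := (q - a) / (b - a) with hρ
  have hρ0 : 0 < ρ := div_pos (by linarith) habpos
  have hρ1 : ρ < 1 := by
    rw [hρ, div_lt_one habpos]
    linarith
  set μ : ℝ := max ρ (1 - ρ) with hμ
  have hρμ : ρ ≤ μ := le_max_left _ _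
  have hρμ' : 1 - ρ ≤ μ := le_max_right _ _
  have hμ0 : 0 < μ := lt_of_lt_of_le hρ0 hρμ
  have hμ1 : μ < 1 := max_lt hρ1 (by linarith)
  set C : ℝ := (1 + μ) / (2 * μ) with hC
  have hC1 : 1 < C := by
    rw [hC, lt_div_iff₀ (by positivity)]
    linarith
  have hC0 : (0:ℝ) < C := lt_trans one_pos hC1
  have hμC : μ * C = (1 + μ) / 2 := by
    rw [hC]
    field_simp
  obtain ⟨k, hk⟩ := pow_unbounded_of_one_lt (2 / (1 - μ)) hC1
  have hCk1 : 2 / (1 - μ) < C ^ (k+1) :=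
    lt_of_lt_of_le hk (pow_le_pow_right₀ (le_of_lt hC1) (by omega))
  have hCne : C ^ ((1:ℤ) - ((k:ℤ)+2)) = (C ^ (k+1))⁻¹ := by
    rw [show (1:ℤ) - ((k:ℤ)+2) = -((k+1 : ℕ):ℤ) by push_cast; ring, zpow_neg, zpow_natCast]
  have hCpow : C ^ ((1:ℤ) - ((k:ℤ)+2)) < (1 - μ)/2 := by
    rw [hCne]
    have hpos : (0:ℝ) < 2 / (1 - μ) := div_pos two_pos (by linarith)
    have h2 : (0:ℝ) < C ^ (k+1) := lt_trans hpos hCk1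
    rw [inv_lt_iff_one_lt_mul₀ h2]
    have hx : (1-μ)/2 * (2/(1-μ)) = 1 := by
      field_simp
      exact div_self (ne_of_gt (by linarith : (0:ℝ) < 1 - μ))
    nlinarith
  have hCpow0 : 0 < C ^ ((1:ℤ) - ((k:ℤ)+2)) := zpow_pos hC0 _
  -- the two constraint packages, for ρ and for 1 - ρ
  have hcon : ∀ ρ' : ℝ, ρ' ≤ μ → 1 - μ ≤ ρ' →
      ρ'*C + C^((1:ℤ) - ((k:ℤ)+2)) < 1 ∧ C^((1:ℤ) - ((k:ℤ)+2)) < ρ' := by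
    intro ρ' h₁ h₂
    constructor
    · have : ρ' * C ≤ μ * C := mul_le_mul_of_nonneg_right h₁ (le_of_lt hC0)
      rw [hμC] at this
      linarith
    · linarith
  have hρlow : 1 - μ ≤ ρ := by linarith
  have hρlow' : 1 - μ ≤ 1 - ρ := by linarith
  obtain ⟨h1ρ, h2ρ⟩ := hcon ρ hρμ hρlow
  obtain ⟨h1ρ', h2ρ'⟩ := hcon (1-ρ) hρμ' hρlow'
  clear_value ρ μ C
  refine ⟨2*(k+2)+1, colR C k, colR_apfree hC1 k, ?_⟩
  rintro ⟨c, l, hl, ⟨col, hmono⟩, hnm⟩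
  apply hnm
  set A : ℝ := c + l * a with hA
  set B : ℝ := c + l * b with hB
  set Q : ℝ := c + l * q with hQ
  clear_value A B Q
  have hABlt : A < B := by rw [hA, hB]; nlinarith
  have hAQlt : A < Q := by rw [hA, hQ]; nlinarith
  have hQBlt : Q < B := by rw [hQ, hB]; nlinarith
  have hQeq : Q = ρ * B + (1 - ρ) * A := by
    rw [hQ, hA, hB, hρ]
    field_simp
    ring
  have cA : colR C k A = col := by
    rw [hA]; exact hmono a haS (by intro h; rw [h] at has₀; exact lt_irrefl _ has₀)
  have cB : colR C k B = col := by
    rw [hB]; exact hmono b hbS (by intro h; rw [h] at hs₀b; exact lt_irrefl _ hs₀b)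
  have cQ : colR C k Q = col := by rw [hQ]; exact hmono q hqS hqs₀
  have hsang : ∀ s ∈ S, A ≤ c + l * s ∧ c + l * s ≤ B := by
    intro s hs
    constructor
    · rw [hA]
      have := hmin s hs
      nlinarith
    · rw [hB]
      have := hmax s hs
      nlinarith
  by_cases hApos : 0 < A
  · -- all positive
    have hBpos : 0 < B := lt_trans hApos hABlt
    have hQpos : 0 < Q := lt_trans hApos hAQlt
    have dAB : ((k:ℤ)+2) ∣ idxC C B - idxC C A :=
      Int.ModEq.dvd (emod_eq_of_colR_pos_eq hApos hBpos (cA.trans cB.symm))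
    have dQB : ((k:ℤ)+2) ∣ idxC C B - idxC C Q :=
      Int.ModEq.dvd (emod_eq_of_colR_pos_eq hQpos hBpos (cQ.trans cB.symm))
    have hidx : idxC C A = idxC C B := key hC1 hρ0 hρ1 h1ρ h2ρ hApos hABlt hQeq dAB dQB
    refine ⟨colR C k A, fun s hs => ?_⟩
    obtain ⟨h1s, h2s⟩ := hsang s hs
    have hxpos : 0 < c + l * s := lt_of_lt_of_le hApos h1s
    have hix : idxC C (c + l * s) = idxC C A := by
      apply idxC_eq hC1
      · exact le_trans (zpow_idxC_le hC1 hApos) h1s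
      · calc c + l * s ≤ B := h2s
          _ < C ^ (idxC C B + 1) := lt_zpow_idxC_succ hC1 hBpos
          _ = C ^ (idxC C A + 1) := by rw [hidx]
    apply Fin.val_injective
    rw [colR_pos hxpos, colR_pos hApos, hix]
  · by_cases hBneg : B < 0
    · -- all negative
      have hAneg : A < 0 := lt_trans hABlt hBneg
      have hQneg : Q < 0 := lt_trans hQBlt hBneg
      have hnBpos : 0 < -B := by linarith
      have hnABlt : -B < -A := by linarith
      have hQeq' : -Q = (1-ρ) * (-A) + (1-(1-ρ)) * (-B) := by
        rw [hQeq]; ring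
      have dAB : ((k:ℤ)+2) ∣ idxC C (-A) - idxC C (-B) :=
        Int.ModEq.dvd (emod_eq_of_colR_neg_eq hBneg hAneg (cB.trans cA.symm))
      have dQB : ((k:ℤ)+2) ∣ idxC C (-A) - idxC C (-Q) :=
        Int.ModEq.dvd (emod_eq_of_colR_neg_eq hQneg hAneg (cQ.trans cA.symm))
      have hidx : idxC C (-B) = idxC C (-A) :=
        key hC1 (by linarith : (0:ℝ) < 1 - ρ) (by linarith : 1 - ρ < 1) h1ρ' h2ρ'
          hnBpos hnABlt hQeq' dAB dQB
      refine ⟨colR C k A, fun s hs => ?_⟩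
      obtain ⟨h1s, h2s⟩ := hsang s hs
      have hxneg : c + l * s < 0 := lt_of_le_of_lt h2s hBneg
      have hix : idxC C (-(c + l * s)) = idxC C (-A) := by
        apply idxC_eq hC1
        · rw [← hidx]
          exact le_trans (zpow_idxC_le hC1 hnBpos) (by linarith)
        · calc -(c + l * s) ≤ -A := by linarith
            _ < C ^ (idxC C (-A) + 1) := lt_zpow_idxC_succ hC1 (by linarith : (0:ℝ) < -A)
      apply Fin.val_injective
      rw [colR_neg hxneg, colR_neg hAneg, hix]
    · -- A ≤ 0 ≤ B : already the pair {A, B} is bicoloured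
      exfalso
      push_neg at hApos hBneg
      have hvals := congrArg Fin.val (cA.trans cB.symm)
      have hB0 : 0 ≤ B := hBneg
      rcases lt_or_eq_of_le hApos with hA0 | hA0
      · rcases lt_or_eq_of_le hB0 with hB1 | hB1
        · rw [colR_neg hA0, colR_pos hB1] at hvals
          have h1 := Int.emod_nonneg (idxC C B) (by omega : ((k:ℤ)+2) ≠ 0)
          have h2 := Int.emod_lt_of_pos (idxC C B) (by omega : (0:ℤ) < (k:ℤ)+2)
          omega
        · rw [colR_neg hA0, ← hB1, colR_zero] at hvals
          have h1 := Int.emod_nonneg (idxC C (-A)) (by omega : ((k:ℤ)+2) ≠ 0)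
          have h2 := Int.emod_lt_of_pos (idxC C (-A)) (by omega : (0:ℤ) < (k:ℤ)+2)
          omega
      · have hB1 : 0 < B := hA0 ▸ hABlt
        rw [hA0, colR_zero, colR_pos hB1] at hvals
        have h1 := Int.emod_nonneg (idxC C B) (by omega : ((k:ℤ)+2) ≠ 0)
        have h2 := Int.emod_lt_of_pos (idxC C B) (by omega : (0:ℤ) < (k:ℤ)+2)
        omega
end

section
/- Let p₁ < p₂ < p₃ be integers, let r = (p₃ − p₂)/(p₃ − p₁) ∈ (0,1) (so that p₂ = r·p₁ + (1 − r)·p₃), and let M be a positive integer with M·r ∈ ℕ. Fix λ ∈ ℕ, λ ≥ 1. Let I₁ and I₃ be intervals of λℕ of lengths 2M and M respectively, with max I₁ < min I₃. Then there exists an interval I₂ of λℕ of length M with max I₁ < max I₂ < max I₃ such that for every q₂ ∈ I₂ there exist q₁ ∈ I₁ and q₃ ∈ I₃ with q₂ = r·q₁ + (1 − r)·q₃; in particular {q₁, q₂, q₃} is a positive homothetic copy of {p₁, p₂, p₃} with q₂ corresponding to p₂. -/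
private lemma key_cast (M m₀ l A B C : ℕ) (r : ℝ) (hM : 0 < M)
    (hrm : (M : ℝ) * r = (m₀ : ℝ))
    (h : (M : ℤ) * (A : ℤ) = (m₀ : ℤ) * (B : ℤ) + ((M : ℤ) - (m₀ : ℤ)) * (C : ℤ)) :
    ((l * A : ℕ) : ℝ) = r * ((l * B : ℕ) : ℝ) + (1 - r) * ((l * C : ℕ) : ℝ) := by
  have hMne : (M : ℝ) ≠ 0 := by
    exact_mod_cast hM.ne'
  have h' : (M : ℝ) * (A : ℝ) = (m₀ : ℝ) * (B : ℝ) + ((M : ℝ) - (m₀ : ℝ)) * (C : ℝ) := by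
    exact_mod_cast h
  push_cast
  refine mul_left_cancel₀ hMne ?_
  linear_combination (l : ℝ) * h' + ((l : ℝ) * (C : ℝ) - (l : ℝ) * (B : ℝ)) * hrm

/-- Given integers `p₁ < p₂ < p₃`, `r = (p₃ − p₂)/(p₃ − p₁)`, a
positive integer `M` with `M·r ∈ ℕ`, and `λ ≥ 1`, for any intervals
`I₁ = {λ(a₁+i) : i < 2M}` and `I₃ = {λ(a₃+i) : i < M}` of `λℕ` with
`max I₁ < min I₃`, there is an interval `I₂ = {λ(a₂+i) : i < M}` of `λℕ` with
`max I₁ < max I₂ < max I₃` such that every `q₂ ∈ I₂` can be written as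
`q₂ = r·q₁ + (1−r)·q₃` with `q₁ ∈ I₁` and `q₃ ∈ I₃`. -/
theorem interval_interpolation (p₁ p₂ p₃ : ℤ) (h12 : p₁ < p₂) (h23 : p₂ < p₃)
    (r : ℝ) (hr : r = ((p₃ : ℝ) - (p₂ : ℝ)) / ((p₃ : ℝ) - (p₁ : ℝ)))
    (M : ℕ) (hM : 0 < M) (hMr : ∃ m : ℕ, (M : ℝ) * r = (m : ℝ))
    (l : ℕ) (hl : 1 ≤ l) (a₁ a₃ : ℕ)
    (hsep : l * (a₁ + (2 * M - 1)) < l * a₃) :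
    ∃ a₂ : ℕ, l * (a₁ + (2 * M - 1)) < l * (a₂ + (M - 1)) ∧
      l * (a₂ + (M - 1)) < l * (a₃ + (M - 1)) ∧
      ∀ i < M, ∃ j < 2 * M, ∃ m < M,
        ((l * (a₂ + i) : ℕ) : ℝ) =
          r * ((l * (a₁ + j) : ℕ) : ℝ) + (1 - r) * ((l * (a₃ + m) : ℕ) : ℝ) := by
  obtain ⟨m₀, hm₀⟩ := hMr
  have hl0 : 0 < l := hl
  have hMR : (0 : ℝ) < M := by exact_mod_cast hM
  have h13 : p₁ < p₃ := h12.trans h23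
  have hden : (0 : ℝ) < (p₃ : ℝ) - (p₁ : ℝ) := by
    have : (p₁ : ℝ) < (p₃ : ℝ) := by exact_mod_cast h13
    linarith
  have hnum : (0 : ℝ) < (p₃ : ℝ) - (p₂ : ℝ) := by
    have : (p₂ : ℝ) < (p₃ : ℝ) := by exact_mod_cast h23
    linarith
  have hr0 : 0 < r := by rw [hr]; positivity
  have hr1 : r < 1 := by
    rw [hr, div_lt_one hden]
    have : (p₁ : ℝ) < (p₂ : ℝ) := by exact_mod_cast h12
    linarith
  have hm₀0 : 0 < m₀ := by
    have h0 : (0 : ℝ) < (m₀ : ℝ) := by rw [← hm₀]; exact mul_pos hMR hr0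
    exact_mod_cast h0
  have hm₀M : m₀ < M := by
    have h0 : (m₀ : ℝ) < (M : ℝ) := by rw [← hm₀]; nlinarith
    exact_mod_cast h0
  -- separation
  have hsep' : a₁ + (2 * M - 1) < a₃ := lt_of_mul_lt_mul_left hsep (Nat.zero_le l)
  obtain ⟨e, ha₃⟩ : ∃ e, a₃ = a₁ + 2 * M + e := ⟨a₃ - (a₁ + 2 * M), by omega⟩
  -- gcd setup
  obtain ⟨M', hM'⟩ : (Nat.gcd M m₀) ∣ M := Nat.gcd_dvd_left M m₀
  obtain ⟨m₀', hm₀'⟩ : (Nat.gcd M m₀) ∣ m₀ := Nat.gcd_dvd_right M m₀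
  set g := Nat.gcd M m₀ with hgdef
  have hgpos : 0 < g := Nat.gcd_pos_of_pos_left _ hM
  have hM'pos : 0 < M' := by
    rcases Nat.eq_zero_or_pos M' with h0 | h0
    · exfalso; rw [h0, Nat.mul_zero] at hM'; omega
    · exact h0
  have hm₀'pos : 0 < m₀' := by
    rcases Nat.eq_zero_or_pos m₀' with h0 | h0
    · exfalso; rw [h0, Nat.mul_zero] at hm₀'; omega
    · exact h0
  have hlt : m₀' < M' := by
    have h1 : g * m₀' < g * M' := by rw [← hM', ← hm₀']; exact hm₀M
    exact lt_of_mul_lt_mul_left h1 (Nat.zero_le g)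
  have hM'leM : M' ≤ M := by
    rw [hM']; exact Nat.le_mul_of_pos_left M' hgpos
  -- division with remainder
  obtain ⟨w₀, ρ, hdw, hρ⟩ : ∃ w ρ, M' * w + ρ = M + e ∧ ρ < M' :=
    ⟨(M + e) / M', (M + e) % M', Nat.div_add_mod _ _, Nat.mod_lt _ hM'pos⟩
  have hw₀ : 1 ≤ w₀ := by
    rcases Nat.eq_zero_or_pos w₀ with h0 | h0
    · exfalso; rw [h0, Nat.mul_zero] at hdw; omega
    · exact h0
  -- integer versions of the key relations
  have zM : (M : ℤ) = (g : ℤ) * (M' : ℤ) := by exact_mod_cast hM'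
  have zm : (m₀ : ℤ) = (g : ℤ) * (m₀' : ℤ) := by exact_mod_cast hm₀'
  have zdw : (M' : ℤ) * (w₀ : ℤ) + (ρ : ℤ) = (M : ℤ) + (e : ℤ) := by exact_mod_cast hdw
  -- case split on ρ < m₀'
  rcases lt_or_ge ρ m₀' with hcase | hcase
  · -- Case A : c = ρ + m₀' * w₀
    obtain ⟨c, hcdef, hc1, hc2⟩ : ∃ c, c = ρ + m₀' * w₀ ∧ 1 ≤ c ∧ c + M < 2 * M + e := by
      refine ⟨ρ + m₀' * w₀, rfl, ?_, ?_⟩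
      · have hge : 1 ≤ m₀' * w₀ := Nat.one_le_iff_ne_zero.mpr
          (Nat.mul_ne_zero (by omega) (by omega))
        linarith
      · have hmul1 : m₀' * w₀ < M' * w₀ :=
          mul_lt_mul_of_pos_right hlt (by omega : 0 < w₀)
        linarith
    have zc : (c : ℤ) = (ρ : ℤ) + (m₀' : ℤ) * (w₀ : ℤ) := by exact_mod_cast hcdef
    have hcA : (M : ℤ) * (c : ℤ)
        = (M : ℤ) * (ρ : ℤ) + (m₀ : ℤ) * ((M : ℤ) + (e : ℤ) - (ρ : ℤ)) := by
      linear_combination (M : ℤ) * zc + (m₀' : ℤ) * (w₀ : ℤ) * zM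
        - (M' : ℤ) * (w₀ : ℤ) * zm + (m₀ : ℤ) * zdw
    refine ⟨a₁ + (2 * M + e - c), ?_, ?_, ?_⟩
    · exact mul_lt_mul_of_pos_left (by omega) hl0
    · exact mul_lt_mul_of_pos_left (by omega) hl0
    · intro i hi
      rcases lt_or_ge (i + m₀') (M + ρ) with hb | hb
      · -- branch A1
        refine ⟨i + (M + m₀' - M'), by omega, i + (m₀' - ρ), by omega, ?_⟩
        refine key_cast M m₀ l _ _ _ r hM hm₀ ?_
        have hs1 : c ≤ 2 * M + e := by omega
        have hs2 : M' ≤ M + m₀' := by omega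
        have hs3 : ρ ≤ m₀' := by omega
        push_cast [hs1, hs2, hs3, ha₃]
        linear_combination (-1 : ℤ) * hcA + (M' : ℤ) * zm - (m₀' : ℤ) * zM
      · -- branch A2
        refine ⟨i + M, by omega, i - ρ, by omega, ?_⟩
        refine key_cast M m₀ l _ _ _ r hM hm₀ ?_
        have hs1 : c ≤ 2 * M + e := by omega
        have hs4 : ρ ≤ i := by omega
        push_cast [hs1, hs4, ha₃]
        linear_combination (-1 : ℤ) * hcA
  · -- Case B : c = m₀' * (w₀ + 1)
    obtain ⟨c, hcdef, hc1, hc2⟩ : ∃ c, c = m₀' * (w₀ + 1) ∧ 1 ≤ c ∧ c + M < 2 * M + e := by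
      refine ⟨m₀' * (w₀ + 1), rfl, ?_, ?_⟩
      · have hge : 1 ≤ m₀' * (w₀ + 1) := Nat.one_le_iff_ne_zero.mpr
          (Nat.mul_ne_zero (by omega) (by omega))
        linarith
      · have hmul2 : (m₀' + 1) * w₀ ≤ M' * w₀ :=
          mul_le_mul_left (by omega : m₀' + 1 ≤ M') w₀
        have hexp1 : (m₀' + 1) * w₀ = m₀' * w₀ + w₀ := by ring
        have hexp2 : m₀' * (w₀ + 1) = m₀' * w₀ + m₀' := by ring
        linarith
    have zc : (c : ℤ) = (m₀' : ℤ) * ((w₀ : ℤ) + 1) := by exact_mod_cast hcdef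
    have hcB : (M : ℤ) * (c : ℤ)
        = (m₀ : ℤ) * ((M : ℤ) + (e : ℤ) - (ρ : ℤ)) + (m₀ : ℤ) * (M' : ℤ) := by
      linear_combination (M : ℤ) * zc + (m₀' : ℤ) * ((w₀ : ℤ) + 1) * zM
        - (M' : ℤ) * ((w₀ : ℤ) + 1) * zm + (m₀ : ℤ) * zdw
    refine ⟨a₁ + (2 * M + e - c), ?_, ?_, ?_⟩
    · exact mul_lt_mul_of_pos_left (by omega) hl0
    · exact mul_lt_mul_of_pos_left (by omega) hl0
    · intro i hi
      refine ⟨i + (M + ρ - M'), by omega, i, by omega, ?_⟩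
      refine key_cast M m₀ l _ _ _ r hM hm₀ ?_
      have hs1 : c ≤ 2 * M + e := by omega
      have hs5 : M' ≤ M + ρ := by omega
      push_cast [hs1, hs5, ha₃]
      linear_combination (-1 : ℤ) * hcB
end

section
/- For every finite set S ⊆ ℤ^d and every k ∈ ℕ there exists Λ ∈ ℕ such that every colouring φ : ℤ^d → Fin k contains a monochromatic positive homothetic copy of S with integer scaling ratio bounded by Λ: there exist c ∈ ℤ^d and λ ∈ ℤ with 1 ≤ λ ≤ Λ such that the set c + λ·S = {c + λ·s : s ∈ S} is monochromatic under φ. -/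
/-- Gallai's theorem for `ℤ^d` with bounded scaling: for every
finite `S ⊆ ℤ^d` and every `k` there is `Λ` such that every `k`-colouring of
`ℤ^d` contains a monochromatic positive homothet `c + λ·S` with `1 ≤ λ ≤ Λ`. -/
theorem gallai_grid (d : ℕ) (S : Set (Fin d → ℤ)) (hfin : S.Finite) (k : ℕ) :
    ∃ Λ : ℕ, ∀ φ : (Fin d → ℤ) → Fin k,
      ∃ (c : Fin d → ℤ) (lam : ℤ), 1 ≤ lam ∧ lam ≤ (Λ : ℤ) ∧
        ∃ col : Fin k, ∀ s ∈ S, φ (c + lam • s) = col := by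
  by_contra hcon
  push_neg at hcon
  -- choose for each n a colouring witnessing failure
  choose φ hφ using hcon
  -- k must be positive, otherwise φ 0 gives a contradiction
  rcases Nat.eq_zero_or_pos k with hk | hk
  · subst hk; exact (φ 0 0).elim0
  haveI : NeZero k := ⟨hk.ne'⟩
  -- ultrafilter limit colouring
  set U : Ultrafilter ℕ := Filter.hyperfilter ℕ with hU
  have hψ : ∀ x : Fin d → ℤ, ∃ c : Fin k, {n | φ n x = c} ∈ U := by
    intro x
    obtain ⟨c, hc⟩ := (U.map fun n => φ n x).eq_pure_of_finite
    refine ⟨c, ?_⟩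
    have : {b : Fin k | b = c} ∈ U.map fun n => φ n x := by
      rw [hc]; exact Filter.mem_pure.2 rfl
    exact this
  choose ψ hψ' using hψ
  obtain ⟨a, ha, b, col, hmono⟩ :=
    Combinatorics.exists_mono_homothetic_copy hfin.toFinset ψ
  -- the set of n where φ n agrees with col on all points of the copy
  have hA : {n : ℕ | ∀ s ∈ hfin.toFinset, φ n (a • s + b) = col} ∈ U := by
    refine (Filter.eventually_all_finset (l := (U : Filter ℕ)) hfin.toFinset
      (p := fun s n => φ n (a • s + b) = col)).2 fun s hs => ?_
    · show {n | φ n (a • s + b) = col} ∈ U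
      have := hψ' (a • s + b)
      rw [hmono s hs] at this
      exact this
  have hB : {n : ℕ | a ≤ n} ∈ U := by
    have h1 : (Set.Iio a)ᶜ ∈ Filter.hyperfilter ℕ :=
      (Set.finite_Iio a).compl_mem_hyperfilter
    have h2 : (Set.Iio a)ᶜ = {n : ℕ | a ≤ n} := by
      ext n; simp [not_lt]
    rwa [h2] at h1
  obtain ⟨n, hnA, hnB⟩ := Filter.nonempty_of_mem (Filter.inter_mem hA hB)
  -- contradict badness of φ n with c := b, lam := a
  obtain ⟨s, hs, hsne⟩ := hφ n b (a : ℤ) (by exact_mod_cast ha)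
    (by exact_mod_cast hnB) col
  apply hsne
  have := hnA s (hfin.mem_toFinset.2 hs)
  rw [add_comm] at this
  rwa [natCast_zsmul]
end

section
/- For every k ∈ ℕ there exists F ∈ ℕ, F ≥ 1, such that the following holds. If φ : ℤ → Fin k is a colouring containing no almost-monochromatic positive homothet of ({0,1,2}, 0) — that is, there are no a ∈ ℤ and d ∈ ℤ, d ≥ 1, with φ(a + d) = φ(a + 2d) and φ(a) ≠ φ(a + d) — then every nonempty colour class of φ is a two-way infinite arithmetic progression {a + i·t : i ∈ ℤ} for some a ∈ ℤ and t ≥ 1, and moreover φ(x + F) = φ(x) for all x ∈ ℤ. -/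
/-!
A monochromatic pair `a + d, a + 2d` forces the colour of `a`, so a monochromatic pair at
distance `d` spreads its colour down the progression below it. If two consecutive integers
have colour `c`, everything to their left has colour `c`; a point of another colour would make
the points of colour `≠ c` unbounded above (no two consecutive ones can both have colour `c`
there), so two of them share a colour, and pushing that pair leftwards lands in the region of
colour `c`, a contradiction. Rescaling by `n ↦ x + n d`, a monochromatic pair at distance `d`
colours all of `x + dℤ`, and a colour class is the progression whose step is its smallest gap.
Periodicity follows by induction on the number of colours: a pigeonhole pair at distance
`t ≤ k` makes one class equal to a coset of `tℤ`, every other coset uses at most `k - 1`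
colours, so `t * F (k - 1)` is a period, and it divides `k! * F (k - 1)`.
-/

open Function Finset

def AlmostMonoFree {α : Type*} (φ : ℤ → α) : Prop :=
  ∀ a d : ℤ, 0 < d → φ (a + d) = φ (a + 2 * d) → φ a = φ (a + d)

namespace AlmostMonoFree

variable {α : Type*} {φ : ℤ → α}

theorem comp_add_mul (hφ : AlmostMonoFree φ) (x : ℤ) {t : ℤ} (ht : 0 < t) :
    AlmostMonoFree fun n ↦ φ (x + n * t) := by
  intro a d hd h
  have e₁ : x + (a + d) * t = x + a * t + d * t := by ring
  have e₂ : x + (a + 2 * d) * t = x + a * t + 2 * (d * t) := by ring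
  simp only [e₁, e₂] at h ⊢
  exact hφ _ _ (mul_pos hd ht) h

theorem apply_eq_of_le (hφ : AlmostMonoFree φ) {x : ℤ} (h : φ x = φ (x + 1)) :
    ∀ y ≤ x + 1, φ y = φ x := by
  have hpair : ∀ y ≤ x, φ y = φ (y + 1) ∧ φ y = φ x := by
    intro y hy
    induction y, hy using Int.leInductionDown with
    | base => exact ⟨h, rfl⟩
    | pred y _ ih =>
      have hstep := hφ (y - 1) 1 one_pos
      rw [show y - 1 + 1 = y by ring, show y - 1 + 2 * 1 = y + 1 by ring] at hstep
      replace hstep := hstep ih.1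
      exact ⟨by simpa using hstep, hstep.trans ih.2⟩
  intro y hy
  rcases hy.lt_or_eq with hy | rfl
  · exact (hpair y (by omega)).2
  · exact h.symm

theorem apply_eq_of_apply_eq_apply_add_one (hφ : AlmostMonoFree φ) (hfin : (Set.range φ).Finite)
    {x : ℤ} (h : φ x = φ (x + 1)) (y : ℤ) : φ y = φ x := by
  by_contra hy
  have hunbdd : ¬BddAbove {z | φ z ≠ φ x} := by
    rintro ⟨M, hM⟩
    have hc : ∀ i : ℤ, 1 ≤ i → φ (max M y + i) = φ x := fun i hi ↦ by
      by_contra hne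
      have := hM hne
      omega
    have hc₂ := hc 2 (by norm_num)
    rw [show max M y + 2 = max M y + 1 + 1 by ring] at hc₂
    have := hφ.apply_eq_of_le ((hc 1 le_rfl).trans hc₂.symm) y (by omega)
    exact hy (this.trans (hc 1 le_rfl))
  obtain ⟨p, hp, q, hq, hpq, hpq'⟩ :=
    (Set.infinite_of_not_bddAbove hunbdd).exists_ne_map_eq_of_mapsTo (Set.mapsTo_range φ _) hfin
  wlog hlt : p < q generalizing p q
  · exact this q hq p hp hpq.symm hpq'.symm (by omega)
  -- the pair `p < q` spreads its colour leftwards into the region coloured `φ x`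
  have hspread :=
    (hφ.comp_add_mul p (sub_pos.2 hlt)).apply_eq_of_le (x := 0) (by simpa using hpq')
  set m := min 0 (x + 1 - p)
  have hm : p + m * (q - p) ≤ x + 1 := by
    nlinarith [min_le_left 0 (x + 1 - p), min_le_right 0 (x + 1 - p)]
  have := (hspread m (by omega)).symm
  simp only [zero_mul, add_zero] at this
  exact hp (this.trans (hφ.apply_eq_of_le h _ hm))

theorem apply_add_mul_eq (hφ : AlmostMonoFree φ) (hfin : (Set.range φ).Finite) {x d : ℤ}
    (hd : 0 < d) (h : φ x = φ (x + d)) (n : ℤ) : φ (x + n * d) = φ x := by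
  have hfin' : (Set.range fun n ↦ φ (x + n * d)).Finite :=
    hfin.subset (Set.range_comp_subset_range (fun n ↦ x + n * d) φ)
  simpa using (hφ.comp_add_mul x hd).apply_eq_of_apply_eq_apply_add_one hfin' (x := 0)
    (by simpa using h) n

theorem exists_apply_eq_iff_dvd (hφ : AlmostMonoFree φ) (hfin : (Set.range φ).Finite) {x : ℤ}
    {d : ℕ} (hd : 0 < d) (h : φ x = φ (x + d)) :
    ∃ t : ℕ, 0 < t ∧ t ≤ d ∧ ∀ y, φ y = φ x ↔ (t : ℤ) ∣ y - x := by
  classical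
  let IsGap (m : ℕ) : Prop := 0 < m ∧ ∃ y, φ y = φ x ∧ φ (y + m) = φ x
  have hgap : ∃ m, IsGap m := ⟨d, hd, x, rfl, h.symm⟩
  obtain ⟨ht, y₀, hy₀, hy₀t⟩ := Nat.find_spec hgap
  set t := Nat.find hgap
  have hdvd : ∀ y, φ y = φ x ↔ (t : ℤ) ∣ y - y₀ := by
    refine fun y ↦ ⟨fun hy ↦ ?_, fun ⟨n, hn⟩ ↦ ?_⟩
    · by_contra hndvd
      set r := (y - y₀) % t
      have hr : 0 < r := (Int.emod_pos_of_not_dvd hndvd).resolve_left (by omega)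
      have hrt : r < t := Int.emod_lt_of_pos _ (by omega)
      have hy' : φ (y - r) = φ x := by
        rw [show y - r = y₀ + (y - y₀) / t * t by simp only [r, Int.emod_def]; ring]
        exact (hφ.apply_add_mul_eq hfin (by omega) (hy₀.trans hy₀t.symm) _).trans hy₀
      exact Nat.find_min hgap (m := r.toNat) (by omega)
        ⟨by omega, y - r, hy', by rwa [Int.toNat_of_nonneg hr.le, sub_add_cancel]⟩
    · rw [show y = y₀ + n * t by linear_combination hn]
      exact (hφ.apply_add_mul_eq hfin (by omega) (hy₀.trans hy₀t.symm) n).trans hy₀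
  have hx := (hdvd x).1 rfl
  refine ⟨t, ht, Nat.find_min' hgap ⟨hd, x, rfl, h.symm⟩, fun y ↦ ?_⟩
  rw [hdvd, show y - x = y - y₀ - (x - y₀) by ring, dvd_sub_left hx]

theorem exists_periodic (n : ℕ) :
    ∃ F : ℕ, 0 < F ∧ ∀ (s : Finset α) (φ : ℤ → α),
      AlmostMonoFree φ → (∀ x, φ x ∈ s) → #s ≤ n → Periodic φ F := by
  induction n with
  | zero =>
    refine ⟨1, one_pos, fun s φ _ hs hcard ↦ ?_⟩
    simpa [Finset.card_eq_zero.1 (Nat.le_zero.1 hcard)] using hs 0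
  | succ n ih =>
    classical
    obtain ⟨F, hF, hper⟩ := ih
    refine ⟨(n + 1).factorial * F, by positivity, fun s φ hφ hs hcard ↦ ?_⟩
    have hfin : (Set.range φ).Finite := s.finite_toSet.subset (Set.range_subset_iff.2 hs)
    obtain ⟨x, d, hd, hdn, hxd⟩ : ∃ x : ℤ, ∃ d : ℕ, 0 < d ∧ d ≤ n + 1 ∧ φ x = φ (x + d) := by
      obtain ⟨i, hi, j, hj, hij, h⟩ := Finset.exists_ne_map_eq_of_card_lt_of_maps_to
        (s := range (n + 2)) (f := fun i : ℕ ↦ φ i) (by simp; omega) (fun i _ ↦ hs i)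
      wlog hlt : i < j generalizing i j
      · exact this j hj i hi hij.symm h.symm (by omega)
      simp only [mem_range] at hj
      exact ⟨i, j - i, by omega, by omega, by simpa [Nat.cast_sub hlt.le] using h⟩
    obtain ⟨t, ht, htd, hcls⟩ := hφ.exists_apply_eq_iff_dvd hfin hd hxd
    have hperiod : Periodic φ ((t : ℤ) * F) := by
      intro z
      by_cases hz : (t : ℤ) ∣ z - x
      · rw [(hcls z).2 hz, (hcls _).2 (by
          rw [show z + t * F - x = z - x + t * F by ring]
          exact hz.add (dvd_mul_right _ _))]
      · -- the coset `z + tℤ` avoids the colour `φ x`, so it is coloured from `s.erase (φ x)`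
        have havoid : ∀ m : ℤ, φ (z + m * t) ∈ s.erase (φ x) := fun m ↦
          mem_erase.2 ⟨fun hm ↦ hz (by
            have := ((hcls _).1 hm).sub (dvd_mul_left (t : ℤ) m)
            rwa [show z + m * t - x - m * t = z - x by ring] at this), hs _⟩
        have := hper _ _ (hφ.comp_add_mul z (by omega)) havoid
          (by rw [card_erase_of_mem (hs x)]; omega) 0
        simpa [mul_comm] using this
    obtain ⟨m, hm⟩ := Nat.dvd_factorial ht (htd.trans hdn)
    have hcast : (((n + 1).factorial * F : ℕ) : ℤ) = m * ((t : ℤ) * F) := by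
      rw [hm]
      push_cast
      ring
    rw [hcast]
    exact hperiod.nat_mul m

end AlmostMonoFree

/-- For every `k` there is `F ≥ 1` such that any `k`-colouring of
`ℤ` with no almost-monochromatic positive homothet of `({0,1,2}, 0)` has every
nonempty colour class a two-way infinite arithmetic progression, and is periodic
with period `F`. -/
theorem colour_classes_are_APs (k : ℕ) :
    ∃ F : ℕ, 1 ≤ F ∧ ∀ φ : ℤ → Fin k,
      (¬ ∃ a d : ℤ, 1 ≤ d ∧ φ (a + d) = φ (a + 2 * d) ∧ φ a ≠ φ (a + d)) →
      (∀ c : Fin k, (∃ x, φ x = c) →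
        ∃ (a t : ℤ), 1 ≤ t ∧ {x : ℤ | φ x = c} = {x : ℤ | ∃ i : ℤ, x = a + i * t}) ∧
      (∀ x : ℤ, φ (x + (F : ℤ)) = φ x) := by
  obtain ⟨F, hF, hper⟩ := AlmostMonoFree.exists_periodic (α := Fin k) k
  refine ⟨F, hF, fun φ hno ↦ ?_⟩
  have hφ : AlmostMonoFree φ := fun a d hd h ↦ by
    by_contra hne
    exact hno ⟨a, d, hd, h, hne⟩
  have hperφ := hper univ φ hφ (fun _ ↦ mem_univ _) (by simp)
  refine ⟨fun c ⟨x, hx⟩ ↦ ?_, hperφ⟩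
  subst hx
  obtain ⟨t, ht, -, hcls⟩ := hφ.exists_apply_eq_iff_dvd (Set.toFinite _) hF (hperφ x).symm
  refine ⟨x, t, by omega, Set.ext fun y ↦ ?_⟩
  simp only [Set.mem_ofPred_eq, hcls]
  exact ⟨fun ⟨i, hi⟩ ↦ ⟨i, by linear_combination hi⟩, fun ⟨i, hi⟩ ↦ ⟨i, by linear_combination hi⟩⟩
end

section
/- For every k ∈ ℕ and every real number c > 0 there exists N ∈ ℕ such that whenever x₁, …, x_k are positive integers with 1/x₁ + 1/x₂ + … + 1/x_k = c, then xᵢ ≤ N for all 1 ≤ i ≤ k. -/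
/-- For every `k` and every real `c > 0` there is `N` such that if
positive integers `x₁, …, x_k` satisfy `1/x₁ + … + 1/x_k = c`, then all
`xᵢ ≤ N`. -/
theorem reciprocal_sum_bounded (k : ℕ) (c : ℝ) (hc : 0 < c) :
    ∃ N : ℕ, ∀ x : Fin k → ℕ, (∀ i, 0 < x i) →
      (∑ i, (1 : ℝ) / (x i : ℝ)) = c → ∀ i, x i ≤ N := by
  induction k generalizing c with
  | zero => exact ⟨0, fun x _ _ i => i.elim0⟩
  | succ k ih =>
    classical
    set M : ℕ := ⌈((k + 1 : ℕ) : ℝ) / c⌉₊ with hM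
    have key : ∀ m : ℕ, ∃ N : ℕ, ∀ x : Fin k → ℕ, (∀ i, 0 < x i) →
        (∑ i, (1 : ℝ) / (x i : ℝ)) = c - 1 / (m : ℝ) → ∀ i, x i ≤ N := by
      intro m
      by_cases h : 0 < c - 1 / (m : ℝ)
      · exact ih _ h
      · refine ⟨0, fun x hx hs i => absurd hs ?_⟩
        have hpos : (0 : ℝ) < ∑ j, (1 : ℝ) / (x j : ℝ) := by
          apply Finset.sum_pos
          · intro j _
            exact one_div_pos.mpr (by exact_mod_cast hx j)
          · exact ⟨i, Finset.mem_univ i⟩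
        intro hs'
        rw [hs'] at hpos
        linarith [not_lt.mp h]
    choose f hf using key
    refine ⟨M + (Finset.range (M + 1)).sup f, fun x hx hs => ?_⟩
    obtain ⟨i₀, -, hmin⟩ := Finset.exists_min_image Finset.univ x ⟨0, Finset.mem_univ 0⟩
    have hx0 : (0 : ℝ) < (x i₀ : ℝ) := by exact_mod_cast hx i₀
    have hsum_le : c ≤ ((k : ℝ) + 1) * (1 / (x i₀ : ℝ)) := by
      rw [← hs]
      calc ∑ i, (1 : ℝ) / (x i : ℝ) ≤ ∑ _i : Fin (k + 1), (1 : ℝ) / (x i₀ : ℝ) := by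
            apply Finset.sum_le_sum
            intro i _
            apply one_div_le_one_div_of_le hx0
            exact_mod_cast hmin i (Finset.mem_univ i)
        _ = ((k : ℝ) + 1) * (1 / (x i₀ : ℝ)) := by
            rw [Finset.sum_const, Finset.card_univ, Fintype.card_fin]
            push_cast; ring
    have hb : (x i₀ : ℝ) ≤ ((k + 1 : ℕ) : ℝ) / c := by
      rw [le_div_iff₀ hc]
      push_cast
      have hinv : (x i₀ : ℝ) * (1 / (x i₀ : ℝ)) = 1 := by field_simp
      nlinarith [mul_le_mul_of_nonneg_right hsum_le hx0.le]
    have hi₀M : x i₀ ≤ M := by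
      have : (x i₀ : ℝ) ≤ (M : ℝ) := hb.trans (Nat.le_ceil _)
      exact_mod_cast this
    have hrest : ∑ j : Fin k, (1 : ℝ) / (x (i₀.succAbove j) : ℝ) = c - 1 / (x i₀ : ℝ) := by
      have := Fin.sum_univ_succAbove (fun i => (1 : ℝ) / (x i : ℝ)) i₀
      rw [hs] at this
      linarith [this]
    have hbound := hf (x i₀) (fun j => x (i₀.succAbove j))
      (fun j => hx _) hrest
    have hfle : f (x i₀) ≤ (Finset.range (M + 1)).sup f :=
      Finset.le_sup (Finset.mem_range.mpr (by omega))
    intro i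
    by_cases hii : i = i₀
    · subst hii; omega
    · obtain ⟨j, hj⟩ := Fin.exists_succAbove_eq (show i ≠ i₀ from hii)
      have h2 : x (i₀.succAbove j) ≤ f (x i₀) := hbound j
      rw [hj] at h2
      omega
end

section
/- Let V ⊆ ℝ² be a finite set and E ⊆ V × V a symmetric relation with ‖v − w‖ = 1 for all (v, w) ∈ E (a unit-distance graph G = (V, E)), and let v₀ ∈ V with neighbours v₁, …, vₙ (the points v with (v₀, v) ∈ E, assumed nonempty). Let C = C₁ ∪ … ∪ Cₙ be the bouquet through v₀ consisting of the unit circles Cᵢ centred at vᵢ. Assume: (1) G has no proper k-colouring with bichromatic origin v₀, i.e. there is no map ψ from V to subsets of Fin k with |ψ(v)| = 1 for all v ≠ v₀, |ψ(v₀)| = 2, and ψ(v) ∩ ψ(w) = ∅ whenever (v, w) ∈ E; and (2) every colouring of ℝ² with finitely many but at least two colours contains a smiling congruent copy of C. Then there is no proper k-colouring of the plane; that is, χ(ℝ²) ≥ k + 1. -/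
/-- If a finite unit-distance graph `(V, E)` in the plane with
origin `v₀` (having at least one neighbour) admits no proper `k`-colouring with
bichromatic origin `v₀`, and every colouring of the plane with finitely many but
at least two colours contains a smiling congruent copy of the bouquet of unit
circles centred at the neighbours of `v₀` and passing through `v₀`, then there is
no proper `k`-colouring of the plane, i.e. `χ(ℝ²) ≥ k + 1`. -/
theorem chromatic_lower_bound (k : ℕ) (V : Set (EuclideanSpace ℝ (Fin 2)))
    (hV : V.Finite)
    (E : EuclideanSpace ℝ (Fin 2) → EuclideanSpace ℝ (Fin 2) → Prop)
    (hEV : ∀ v w, E v w → v ∈ V ∧ w ∈ V)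
    (hEsymm : ∀ v w, E v w → E w v)
    (hEunit : ∀ v w, E v w → dist v w = 1)
    (v₀ : EuclideanSpace ℝ (Fin 2)) (hv₀ : v₀ ∈ V)
    (hnbr : ∃ v, E v₀ v)
    (hnocol : ¬ ∃ ψ : EuclideanSpace ℝ (Fin 2) → Finset (Fin k),
      (∀ v ∈ V, v ≠ v₀ → (ψ v).card = 1) ∧ (ψ v₀).card = 2 ∧
      ∀ v w, E v w → Disjoint (ψ v) (ψ w))
    (hsmile : ∀ (k' : ℕ) (φ : EuclideanSpace ℝ (Fin 2) → Fin k'),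
      (∃ x y, φ x ≠ φ y) →
      ∃ (f : EuclideanSpace ℝ (Fin 2) ≃ᵢ EuclideanSpace ℝ (Fin 2)) (c : Fin k'),
        φ (f v₀) ≠ c ∧ ∀ v, E v₀ v → ∃ p, dist p v = 1 ∧ φ (f p) = c) :
    ¬ ∃ φ : EuclideanSpace ℝ (Fin 2) → Fin k,
      ∀ p q, dist p q = 1 → φ p ≠ φ q := by
  classical
  rintro ⟨φ, hφ⟩
  obtain ⟨v₁, hv₁⟩ := hnbr
  obtain ⟨f, c, hc, hcirc⟩ := hsmile k φ ⟨v₀, v₁, hφ _ _ (hEunit _ _ hv₁)⟩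
  apply hnocol
  refine ⟨fun v => if v = v₀ then {φ (f v₀), c} else {φ (f v)}, ?_, ?_, ?_⟩
  · intro v _ hv; simp [hv]
  · simp [Finset.card_insert_of_notMem, hc]
  · intro v w hvw
    have hd : dist v w = 1 := hEunit _ _ hvw
    have hfvw : φ (f v) ≠ φ (f w) := hφ _ _ (by rw [f.dist_eq]; exact hd)
    have hvw' : v ≠ w := fun h => by simp [h] at hd
    rw [Finset.disjoint_left]
    intro a ha hb
    beta_reduce at ha hb
    by_cases hv : v = v₀
    · have hw : ¬ w = v₀ := fun h => hvw' (hv.trans h.symm)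
      rw [if_pos hv, Finset.mem_insert, Finset.mem_singleton] at ha
      rw [if_neg hw, Finset.mem_singleton] at hb
      obtain ⟨p, hp1, hp2⟩ := hcirc w (by rw [← hv]; exact hvw)
      have hpw : φ (f p) ≠ φ (f w) := hφ _ _ (by rw [f.dist_eq]; exact hp1)
      have hv0w : φ (f v₀) ≠ φ (f w) := by rw [← hv]; exact hfvw
      rcases ha with h | h
      · exact hv0w (h.symm.trans hb)
      · exact hpw (hp2.trans (h.symm.trans hb))
    · by_cases hw : w = v₀
      · rw [if_pos hw, Finset.mem_insert, Finset.mem_singleton] at hb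
        rw [if_neg hv, Finset.mem_singleton] at ha
        obtain ⟨p, hp1, hp2⟩ := hcirc v (hEsymm _ _ (by rw [← hw]; exact hvw))
        have hpv : φ (f p) ≠ φ (f v) := hφ _ _ (by rw [f.dist_eq]; exact hp1)
        have hv0v : φ (f v₀) ≠ φ (f v) := by rw [← hw]; exact hfvw.symm
        rcases hb with h | h
        · exact hv0v (h.symm.trans ha)
        · exact hpv (hp2.trans (h.symm.trans ha))
      · rw [if_neg hv, Finset.mem_singleton] at ha
        rw [if_neg hw, Finset.mem_singleton] at hb
        exact hfvw (ha.symm.trans hb)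
end

section
/- Let C₁, …, Cₙ be unit circles in ℝ² with centres O₁, …, Oₙ, all passing through a common point O. Then for every real λ with 0 < λ ≤ 2 there exist points P₁ ∈ C₁, …, Pₙ ∈ Cₙ and an isometry f of ℝ² such that f(λ·Oⱼ) = Pⱼ for every j; that is, (P₁, …, Pₙ) is a congruent copy of the λ-scaled tuple (λ·O₁, …, λ·Oₙ). -/
/-!
Let `R` be the rotation by the angle `θ` with `cos θ = λ / 2` (possible as `0 < λ ≤ 2`). For
every vector `w`, `‖λ • R w - w‖² = (λ² - 2 λ cos θ + 1) ‖w‖² = ‖w‖²`. Hence the isometry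
`x ↦ O + R (x - λ • O)` sends `λ • Oⱼ` to `Oⱼ + (λ • R wⱼ - wⱼ)` with `wⱼ = Oⱼ - O`, a point at
distance `‖wⱼ‖ = 1` from `Oⱼ`.
-/

open Module Real RealInnerProductSpace

section

variable {V : Type*} [NormedAddCommGroup V] [InnerProductSpace ℝ V] [Fact (finrank ℝ V = 2)]

theorem Orientation.inner_rotation_self (o : Orientation ℝ V (Fin 2)) (θ : Real.Angle) (x : V) :
    ⟪o.rotation θ x, x⟫ = θ.cos * ‖x‖ ^ 2 := by
  rw [o.rotation_apply, inner_add_left, real_inner_smul_left, real_inner_smul_left,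
    o.inner_rightAngleRotation_self, real_inner_self_eq_norm_sq, mul_zero, add_zero]

theorem Orientation.norm_smul_rotation_arccos_sub_self (o : Orientation ℝ V (Fin 2)) {lam : ℝ}
    (hlam : |lam| ≤ 2) (x : V) :
    ‖lam • o.rotation (arccos (lam / 2) : ℝ) x - x‖ = ‖x‖ := by
  have hcos : (arccos (lam / 2) : Real.Angle).cos = lam / 2 := by
    rw [Real.Angle.cos_coe, cos_arccos] <;> linarith [abs_le.mp hlam]
  rw [← sq_eq_sq₀ (norm_nonneg _) (norm_nonneg _), norm_sub_sq_real, norm_smul,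
    real_inner_smul_left, o.inner_rotation_self, hcos, LinearIsometryEquiv.norm_map,
    Real.norm_eq_abs, mul_pow, sq_abs]
  ring

end

/-- Given unit circles `C₁, …, Cₙ` with centres `O₁, …, Oₙ` all
passing through a common point `O`, for every `0 < λ ≤ 2` there are points
`Pⱼ ∈ Cⱼ` and an isometry `f` of the plane with `f(λ·Oⱼ) = Pⱼ` for all `j`. -/
theorem scaled_centres_on_circles (n : ℕ) (O : EuclideanSpace ℝ (Fin 2))
    (Oc : Fin n → EuclideanSpace ℝ (Fin 2))
    (hunit : ∀ j, dist O (Oc j) = 1)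
    (lam : ℝ) (hlam0 : 0 < lam) (hlam2 : lam ≤ 2) :
    ∃ (P : Fin n → EuclideanSpace ℝ (Fin 2))
      (f : EuclideanSpace ℝ (Fin 2) ≃ᵢ EuclideanSpace ℝ (Fin 2)),
      (∀ j, dist (P j) (Oc j) = 1) ∧ ∀ j, f (lam • Oc j) = P j := by
  have : Fact (finrank ℝ (EuclideanSpace ℝ (Fin 2)) = 2) := ⟨finrank_euclideanSpace_fin⟩
  let o : Orientation ℝ (EuclideanSpace ℝ (Fin 2)) (Fin 2) :=
    (EuclideanSpace.basisFun (Fin 2) ℝ).toBasis.orientation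
  let R := o.rotation (arccos (lam / 2) : ℝ)
  let f := ((IsometryEquiv.addRight (-(lam • O))).trans R.toIsometryEquiv).trans
    (IsometryEquiv.addRight O)
  refine ⟨fun j => f (lam • Oc j), f, fun j => ?_, fun _ => rfl⟩
  have hf : f (lam • Oc j) - Oc j = lam • R (Oc j - O) - (Oc j - O) := by
    simp only [f, IsometryEquiv.trans_apply, IsometryEquiv.addRight_apply,
      LinearIsometryEquiv.coe_toIsometryEquiv, ← sub_eq_add_neg, ← smul_sub, map_smul]
    abel
  rw [dist_eq_norm, hf, o.norm_smul_rotation_arccos_sub_self (abs_le.mpr ⟨by linarith, hlam2⟩),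
    ← dist_eq_norm, dist_comm, hunit]
end
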